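/- arXiv:1908.01136 — 6 statements merged into one kernel-verified Lean document; each statement's English description precedes it below -/
import Mathlib

section
/- For a real parameter $\theta$ and complex $\alpha$, the first three coefficients $\gamma_0, \gamma_1, \gamma_2$ in the expansion $\xi^{\theta}\left(\frac{-\ln \xi}{1-\xi}\right)^{-\alpha} = \sum_{i=0}^{\infty} \gamma_i (1-\xi)^i$ are $\gamma_0 = 1$, $\gamma_1 = -\frac{\alpha}{2} - \theta$, and $\gamma_2 = \frac{1}{8}(\alpha+2\theta)^2 - \frac{1}{24}(5\alpha + 12\theta)$. -/
open Filter Asymptotics Topology Set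

private lemma isBigO_ofReal' {f g : ℝ → ℝ} {l : Filter ℝ} (h : f =O[l] g) :
    (fun x => ((f x : ℝ) : ℂ)) =O[l] g := by
  rw [isBigO_iff] at h ⊢
  simpa [Complex.norm_real] using h

private lemma pow_isBigO' {m n : ℕ} (h : n ≤ m) :
    (fun x : ℝ => x ^ m) =O[𝓝[>](0:ℝ)] fun x => x ^ n := by
  rw [isBigO_iff]
  refine ⟨1, ?_⟩
  filter_upwards [Ioo_mem_nhdsGT_of_mem (⟨le_refl 0, by norm_num⟩ : (0:ℝ) ∈ Ico (0:ℝ) 1)]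
    with x hx
  rcases hx with ⟨h0, h1⟩
  rw [one_mul, Real.norm_eq_abs, Real.norm_eq_abs, abs_of_pos (by positivity),
    abs_of_pos (by positivity)]
  exact pow_le_pow_of_le_one h0.le h1.le h

private lemma castpow_isBigO' (k : ℕ) :
    (fun x : ℝ => ((x:ℂ)) ^ k) =O[𝓝[>](0:ℝ)] fun x => x ^ k := by
  rw [isBigO_iff]
  refine ⟨1, ?_⟩
  filter_upwards with x
  simp [norm_pow, Complex.norm_real]

private lemma tendsto_x : Tendsto (fun x : ℝ => x) (𝓝[>](0:ℝ)) (𝓝 0) := by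
  exact (continuous_id.tendsto (0:ℝ)).mono_left nhdsWithin_le_nhds

private lemma coeffs_zero {a b c : ℂ}
    (h : (fun x : ℝ => a + b * (x:ℂ) + c * (x:ℂ)^2) =O[𝓝[>](0:ℝ)] fun x => x^3) :
    a = 0 ∧ b = 0 ∧ c = 0 := by
  have hx3 : Tendsto (fun x : ℝ => x^3) (𝓝[>](0:ℝ)) (𝓝 0) := by
    have : Tendsto (fun x : ℝ => x^3) (𝓝 (0:ℝ)) (𝓝 0) := by
      simpa using (continuous_pow 3).tendsto (0:ℝ)
    exact this.mono_left nhdsWithin_le_nhds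
  have ha : a = 0 := by
    have h1 : Tendsto (fun x:ℝ => a + b*(x:ℂ) + c*(x:ℂ)^2) (𝓝[>](0:ℝ)) (𝓝 a) := by
      have hc : Continuous (fun x:ℝ => a + b*(x:ℂ) + c*(x:ℂ)^2) := by fun_prop
      have := hc.tendsto 0
      simpa using this.mono_left nhdsWithin_le_nhds
    exact tendsto_nhds_unique h1 (h.trans_tendsto hx3)
  subst ha
  rw [isBigO_iff] at h
  obtain ⟨C, hC⟩ := h
  have h2 : ∀ᶠ x : ℝ in 𝓝[>](0:ℝ), ‖b + c*(x:ℂ)‖ ≤ C * x^2 := by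
    filter_upwards [hC, self_mem_nhdsWithin] with x hx hx0
    have hx0 : (0:ℝ) < x := hx0
    have hnorm : ‖b + c*(x:ℂ)‖ * x ≤ C * x^3 := by
      have : ‖b + c*(x:ℂ)‖ * x = ‖0 + b*(x:ℂ) + c*(x:ℂ)^2‖ := by
        rw [show (0:ℂ) + b*(x:ℂ) + c*(x:ℂ)^2 = (b + c*(x:ℂ)) * (x:ℂ) by ring, norm_mul,
          Complex.norm_real, Real.norm_eq_abs, abs_of_pos hx0]
      rw [this]
      calc ‖(0:ℂ) + b*(x:ℂ) + c*(x:ℂ)^2‖ ≤ C * ‖x^3‖ := hx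
        _ = C * x^3 := by rw [Real.norm_eq_abs, abs_of_pos (by positivity)]
    calc ‖b + c*(x:ℂ)‖ = ‖b + c*(x:ℂ)‖ * x / x := by field_simp
      _ ≤ C * x^3 / x := by gcongr
      _ = C * x^2 := by field_simp
  have hb : b = 0 := by
    have h1 : Tendsto (fun x:ℝ => b + c*(x:ℂ)) (𝓝[>](0:ℝ)) (𝓝 b) := by
      have hc : Continuous (fun x:ℝ => b + c*(x:ℂ)) := by fun_prop
      have := hc.tendsto 0
      simpa using this.mono_left nhdsWithin_le_nhds
    have h0 : Tendsto (fun x:ℝ => b + c*(x:ℂ)) (𝓝[>](0:ℝ)) (𝓝 0) := by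
      rw [tendsto_zero_iff_norm_tendsto_zero]
      have hC2 : Tendsto (fun x:ℝ => C * x^2) (𝓝[>](0:ℝ)) (𝓝 0) := by
        have : Tendsto (fun x:ℝ => C * x^2) (𝓝 (0:ℝ)) (𝓝 0) := by
          have := (continuous_const.mul (continuous_pow 2) : Continuous fun x:ℝ => C * x^2).tendsto 0
          convert this using 2 <;> simp [Pi.mul_apply]
        exact this.mono_left nhdsWithin_le_nhds
      apply squeeze_zero' (by filter_upwards with x using norm_nonneg _) h2 hC2
    exact tendsto_nhds_unique h1 h0
  subst hb
  refine ⟨rfl, rfl, ?_⟩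
  have h3 : ∀ᶠ x : ℝ in 𝓝[>](0:ℝ), ‖c‖ ≤ C * x := by
    filter_upwards [h2, self_mem_nhdsWithin] with x hx hx0
    have hx0 : (0:ℝ) < x := hx0
    have hcx : ‖c‖ * x ≤ (C * x) * x := by
      have := hx
      simp only [zero_add, norm_mul, Complex.norm_real, Real.norm_eq_abs, abs_of_pos hx0] at this
      nlinarith
    exact le_of_mul_le_mul_right hcx hx0
  have hCx : Tendsto (fun x:ℝ => C * x) (𝓝[>](0:ℝ)) (𝓝 0) := by
    have := (continuous_const.mul continuous_id : Continuous fun x:ℝ => C * x).tendsto 0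
    convert this.mono_left nhdsWithin_le_nhds using 2 <;> simp [Pi.mul_apply]
  have : ‖c‖ ≤ 0 := ge_of_tendsto hCx h3
  simpa using le_antisymm this (norm_nonneg c)

private lemma log_expand3 :
    (fun x : ℝ => Real.log (1-x) + (x + x^2/2 + x^3/3)) =O[𝓝[>](0:ℝ)] fun x => x^4 := by
  rw [isBigO_iff]
  refine ⟨2, ?_⟩
  filter_upwards [Ioo_mem_nhdsGT_of_mem (⟨le_refl 0, by norm_num⟩ : (0:ℝ) ∈ Ico (0:ℝ) (1/2))]
    with x hx
  rcases hx with ⟨h0, h2⟩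
  have hx1 : |x| < 1 := by rw [abs_of_pos h0]; linarith
  have := Real.abs_log_sub_add_sum_range_le hx1 3
  have hsum : (∑ i ∈ Finset.range 3, x ^ (i + 1) / ((i:ℝ) + 1)) = x + x^2/2 + x^3/3 := by
    simp [Finset.sum_range_succ]
    ring
  rw [hsum, abs_of_pos h0] at this
  have h1x : (1:ℝ)/2 ≤ 1 - x := by linarith
  calc ‖Real.log (1-x) + (x + x^2/2 + x^3/3)‖
      = |x + x^2/2 + x^3/3 + Real.log (1-x)| := by rw [Real.norm_eq_abs]; ring_nf
    _ ≤ x^4 / (1 - x) := this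
    _ ≤ x^4 / (1/2) := by
        apply div_le_div_of_nonneg_left (by positivity) (by norm_num) h1x
    _ = 2 * ‖x^4‖ := by rw [Real.norm_eq_abs, abs_of_pos (by positivity)]; ring

private lemma log_expand2 :
    (fun x : ℝ => Real.log (1-x) + (x + x^2/2)) =O[𝓝[>](0:ℝ)] fun x => x^3 := by
  have h1 := (log_expand3.trans (pow_isBigO' (by norm_num : 3 ≤ 4)))
  have h2 : (fun x : ℝ => -(x^3/3)) =O[𝓝[>](0:ℝ)] fun x => x^3 :=
    ((pow_isBigO' (le_refl 3)).const_mul_left (-1/3)).congr_left (fun x => by ring)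
  exact (h1.add h2).congr_left (fun x => by ring)

private noncomputable def yy (x : ℝ) : ℝ := 1 + Real.log (1-x) / x

private lemma y_expand :
    (fun x : ℝ => yy x + (x/2 + x^2/3)) =O[𝓝[>](0:ℝ)] fun x => x^3 := by
  have h := log_expand3
  rw [isBigO_iff] at h
  obtain ⟨C, hC⟩ := h
  rw [isBigO_iff]
  refine ⟨C, ?_⟩
  filter_upwards [hC, self_mem_nhdsWithin] with x hx hx0
  have hx0 : (0:ℝ) < x := hx0
  have heq : yy x + (x/2 + x^2/3)
      = (Real.log (1-x) + (x + x^2/2 + x^3/3)) / x := by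
    unfold yy; field_simp; ring
  rw [heq, Real.norm_eq_abs, abs_div, abs_of_pos hx0]
  simp only [Real.norm_eq_abs] at hx ⊢
  calc |Real.log (1-x) + (x + x^2/2 + x^3/3)| / x ≤ C * |x^4| / x := by gcongr
    _ = C * |x^3| := by
        rw [abs_of_pos (show (0:ℝ) < x^4 by positivity), abs_of_pos (by positivity)]
        field_simp

private lemma y_isBigO : (fun x : ℝ => yy x) =O[𝓝[>](0:ℝ)] fun x => x := by
  have h1 := y_expand.trans ((pow_isBigO' (by norm_num : 1 ≤ 3)).congr_right fun x => pow_one x)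
  have h2 : (fun x : ℝ => -(x/2) + -(x^2/3)) =O[𝓝[>](0:ℝ)] fun x => x := by
    have a1 : (fun x : ℝ => -(x/2)) =O[𝓝[>](0:ℝ)] fun x => x := by
      have := ((castpow_isBigO' 0).const_mul_left 0)
      exact (isBigO_refl (fun x : ℝ => x) _).const_mul_left (-1/2) |>.congr_left fun x => by ring
    have a2 : (fun x : ℝ => -(x^2/3)) =O[𝓝[>](0:ℝ)] fun x => x := by
      have := (pow_isBigO' (by norm_num : 1 ≤ 2)).congr_right (fun x : ℝ => pow_one x)
      exact (this.const_mul_left (-1/3)).congr_left fun x => by ring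
    exact a1.add a2
  exact (h1.add h2).congr_left fun x => by ring

private lemma y_half : ∀ᶠ x : ℝ in 𝓝[>](0:ℝ), |yy x| < 1/2 := by
  have hy0 : Tendsto yy (𝓝[>](0:ℝ)) (𝓝 0) := y_isBigO.trans_tendsto tendsto_x
  have := Metric.tendsto_nhds.mp hy0 (1/2) (by norm_num)
  simpa [Real.dist_eq] using this

private lemma logL_expand :
    (fun x : ℝ => Real.log ((-Real.log (1-x))/x) - (x/2 + 5*x^2/24)) =O[𝓝[>](0:ℝ)]
      fun x => x^3 := by
  obtain ⟨K, hK⟩ := isBigO_iff.mp y_isBigO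
  have term1 : (fun x : ℝ => Real.log (1 - yy x) + (yy x + (yy x)^2/2)) =O[𝓝[>](0:ℝ)]
      fun x => x^3 := by
    rw [isBigO_iff]
    refine ⟨2 * K^3, ?_⟩
    filter_upwards [hK, y_half, self_mem_nhdsWithin] with x h1 h2 h3
    have hx0 : (0:ℝ) < x := h3
    have hy1 : |yy x| < 1 := by linarith [abs_nonneg (yy x)]
    have hb := Real.abs_log_sub_add_sum_range_le hy1 2
    have hsum : (∑ i ∈ Finset.range 2, (yy x) ^ (i + 1) / ((i:ℝ) + 1))
        = yy x + (yy x)^2/2 := by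
      simp [Finset.sum_range_succ]
      norm_num
    rw [hsum] at hb
    have hKx : |yy x| ≤ K * |x| := by simpa [Real.norm_eq_abs] using h1
    have hKx0 : 0 ≤ K * |x| := le_trans (abs_nonneg _) hKx
    have hcube : |yy x|^3 ≤ (K*|x|)^3 := pow_le_pow_left₀ (abs_nonneg _) hKx 3
    have h1y : (1:ℝ)/2 ≤ 1 - |yy x| := by linarith
    calc ‖Real.log (1 - yy x) + (yy x + (yy x)^2/2)‖
        = |yy x + (yy x)^2/2 + Real.log (1 - yy x)| := by rw [Real.norm_eq_abs]; ring_nf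
      _ ≤ |yy x|^3 / (1 - |yy x|) := hb
      _ ≤ |yy x|^3 / (1/2) :=
          div_le_div_of_nonneg_left (by positivity) (by norm_num) h1y
      _ = 2 * |yy x|^3 := by ring
      _ ≤ 2 * (K*|x|)^3 := by linarith
      _ = 2 * K^3 * ‖x^3‖ := by
          rw [Real.norm_eq_abs, abs_pow, mul_pow]; ring
  have hplus : (fun x : ℝ => yy x + x/2) =O[𝓝[>](0:ℝ)] fun x => x^2 := by
    have h1 := y_expand.trans (pow_isBigO' (by norm_num : 2 ≤ 3))
    have h2 : (fun x : ℝ => -(x^2/3)) =O[𝓝[>](0:ℝ)] fun x => x^2 :=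
      ((pow_isBigO' (le_refl 2)).const_mul_left (-1/3)).congr_left fun x => by ring
    exact (h1.add h2).congr_left fun x => by ring
  have hminus : (fun x : ℝ => yy x - x/2) =O[𝓝[>](0:ℝ)] fun x => x := by
    have h2 : (fun x : ℝ => -(x/2)) =O[𝓝[>](0:ℝ)] fun x => x :=
      ((isBigO_refl (fun x : ℝ => x) _).const_mul_left (-1/2)).congr_left fun x => by ring
    exact (y_isBigO.add h2).congr_left fun x => by ring
  have term3 : (fun x : ℝ => (yy x)^2 - x^2/4) =O[𝓝[>](0:ℝ)] fun x => x^3 :=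
    (hplus.mul hminus).congr (fun x => by ring) (fun x => by ring)
  have hcomb : (fun x : ℝ => Real.log (1 - yy x) - (x/2 + 5*x^2/24)) =O[𝓝[>](0:ℝ)]
      fun x => x^3 := by
    have := (term1.sub y_expand).sub (term3.const_mul_left (1/2))
    exact this.congr_left fun x => by ring
  refine Filter.EventuallyEq.trans_isBigO ?_ hcomb
  filter_upwards [self_mem_nhdsWithin] with x hx0
  have hx0 : (0:ℝ) < x := hx0
  have : (-Real.log (1-x))/x = 1 - yy x := by unfold yy; field_simp; ring
  rw [this]

private noncomputable def ww (α : ℂ) (θ : ℝ) (x : ℝ) : ℂ :=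
  (θ:ℂ) * ((Real.log (1-x) : ℝ) : ℂ) - α * ((Real.log ((-Real.log (1-x))/x) : ℝ) : ℂ)

private lemma w_expand (α : ℂ) (θ : ℝ) :
    (fun x : ℝ => ww α θ x - ((-(θ:ℂ) - α/2)*(x:ℂ) + (-(θ:ℂ)/2 - 5*α/24)*(x:ℂ)^2))
      =O[𝓝[>](0:ℝ)] fun x => x^3 := by
  have h1 := (isBigO_ofReal' log_expand2).const_mul_left (θ:ℂ)
  have h2 := (isBigO_ofReal' logL_expand).const_mul_left α
  exact (h1.sub h2).congr_left fun x => by unfold ww; push_cast; ring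

private lemma w_isBigO (α : ℂ) (θ : ℝ) :
    (fun x : ℝ => ww α θ x) =O[𝓝[>](0:ℝ)] fun x => x := by
  have hx1C : (fun x : ℝ => (-(θ:ℂ) - α/2) * (x:ℂ)) =O[𝓝[>](0:ℝ)] fun x => x :=
    (((castpow_isBigO' 1).const_mul_left (-(θ:ℂ) - α/2)).congr_left
      fun x => by rw [pow_one]).trans
      ((isBigO_refl _ _).congr_left fun x : ℝ => (pow_one x).symm)
  have hx2C : (fun x : ℝ => (-(θ:ℂ)/2 - 5*α/24) * (x:ℂ)^2) =O[𝓝[>](0:ℝ)] fun x => x :=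
    ((castpow_isBigO' 2).const_mul_left _).trans
      ((pow_isBigO' (by norm_num : 1 ≤ 2)).congr_right fun x => pow_one x)
  have h3 := (w_expand α θ).trans
      ((pow_isBigO' (by norm_num : 1 ≤ 3)).congr_right fun x => pow_one x)
  exact ((h3.add hx1C).add hx2C).congr_left fun x => by ring

private lemma exp_w_expand (α : ℂ) (θ : ℝ) :
    (fun x : ℝ => Complex.exp (ww α θ x) - (1 + ww α θ x + (ww α θ x)^2/2))
      =O[𝓝[>](0:ℝ)] fun x => x^3 := by
  obtain ⟨K, hK⟩ := isBigO_iff.mp (w_isBigO α θ)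
  have hw0 : Tendsto (ww α θ) (𝓝[>](0:ℝ)) (𝓝 0) := (w_isBigO α θ).trans_tendsto tendsto_x
  have hw1 : ∀ᶠ x : ℝ in 𝓝[>](0:ℝ), ‖ww α θ x‖ ≤ 1 := by
    have := Metric.tendsto_nhds.mp hw0 1 (by norm_num)
    filter_upwards [this] with x hx
    simp only [dist_zero_right] at hx
    exact hx.le
  rw [isBigO_iff]
  refine ⟨K^3, ?_⟩
  filter_upwards [hK, hw1, self_mem_nhdsWithin] with x h1 h2 h3
  have hx0 : (0:ℝ) < x := h3
  have habs : ‖ww α θ x‖ ≤ 1 := h2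
  have hb := Complex.exp_bound habs (by norm_num : 0 < 3)
  have hsum : (∑ m ∈ Finset.range 3, (ww α θ x) ^ m / (m.factorial : ℂ))
      = 1 + ww α θ x + (ww α θ x)^2/2 := by
    simp [Finset.sum_range_succ, Nat.factorial]
  rw [hsum] at hb
  have hKx : ‖ww α θ x‖ ≤ K * |x| := by simpa [Real.norm_eq_abs] using h1
  have hcube : ‖ww α θ x‖^3 ≤ (K*|x|)^3 := pow_le_pow_left₀ (norm_nonneg _) hKx 3
  have hc0 : (0:ℝ) ≤ ‖ww α θ x‖ ^ 3 := by positivity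
  calc ‖Complex.exp (ww α θ x) - (1 + ww α θ x + (ww α θ x)^2/2)‖
      = ‖Complex.exp (ww α θ x) - (1 + ww α θ x + (ww α θ x)^2/2)‖ := rfl
    _ ≤ ‖ww α θ x‖ ^ 3 * ((3:ℕ).succ * (((3:ℕ).factorial : ℝ) * 3)⁻¹) := hb
    _ ≤ ‖ww α θ x‖ ^ 3 * 1 := by
        apply mul_le_mul_of_nonneg_left _ hc0
        norm_num [Nat.factorial]
    _ = ‖ww α θ x‖^3 := by rw [mul_one]
    _ ≤ (K*|x|)^3 := hcube
    _ = K^3 * ‖x^3‖ := by rw [Real.norm_eq_abs, abs_pow, mul_pow]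

private lemma F_eq_exp_w (α : ℂ) (θ : ℝ) :
    ∀ᶠ x : ℝ in 𝓝[>](0:ℝ),
      ((1-x : ℝ) : ℂ)^(θ:ℂ) * ((((-Real.log (1-x)) / x : ℝ)) : ℂ)^(-α)
        = Complex.exp (ww α θ x) := by
  filter_upwards [Ioo_mem_nhdsGT_of_mem (⟨le_refl 0, by norm_num⟩ : (0:ℝ) ∈ Ico (0:ℝ) (1/2)),
    y_half] with x hx hy
  rcases hx with ⟨hx0, hx2⟩
  have h1x : (0:ℝ) < 1 - x := by linarith
  have hL : (0:ℝ) < (-Real.log (1-x))/x := by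
    have : (-Real.log (1-x))/x = 1 - yy x := by unfold yy; field_simp; ring
    rw [this]
    have := abs_lt.mp hy
    linarith [this.2]
  have e1 : ((1-x : ℝ) : ℂ)^(θ:ℂ)
      = Complex.exp (((Real.log (1-x) : ℝ) : ℂ) * (θ:ℂ)) := by
    rw [Complex.cpow_def_of_ne_zero (by exact_mod_cast h1x.ne'),
      ← Complex.ofReal_log h1x.le]
  have e2 : ((((-Real.log (1-x)) / x : ℝ)) : ℂ)^(-α)
      = Complex.exp (((Real.log ((-Real.log (1-x))/x) : ℝ) : ℂ) * (-α)) := by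
    rw [Complex.cpow_def_of_ne_zero (by exact_mod_cast hL.ne'),
      ← Complex.ofReal_log hL.le]
  rw [e1, e2, ← Complex.exp_add]
  unfold ww
  congr 1
  ring

private lemma Fside (α : ℂ) (θ : ℝ) :
    (fun x : ℝ => ((1-x : ℝ) : ℂ)^(θ:ℂ) * ((((-Real.log (1-x)) / x : ℝ)) : ℂ)^(-α)
      - (1 + (-(θ:ℂ) - α/2)*(x:ℂ)
          + ((-(θ:ℂ)/2 - 5*α/24) + (-(θ:ℂ) - α/2)^2/2)*(x:ℂ)^2))
      =O[𝓝[>](0:ℝ)] fun x => x^3 := by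
  set c1 : ℂ := -(θ:ℂ) - α/2 with hc1
  set d2 : ℂ := -(θ:ℂ)/2 - 5*α/24 with hd2
  have hx1C : (fun x : ℝ => c1 * (x:ℂ)) =O[𝓝[>](0:ℝ)] fun x => x :=
    (((castpow_isBigO' 1).const_mul_left c1).congr_left fun x => by rw [pow_one]).trans
      ((isBigO_refl _ _).congr_left fun x : ℝ => (pow_one x).symm)
  have hwm : (fun x : ℝ => ww α θ x - c1*(x:ℂ)) =O[𝓝[>](0:ℝ)] fun x => x^2 := by
    have h1 := (w_expand α θ).trans (pow_isBigO' (by norm_num : 2 ≤ 3))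
    have h2 := (castpow_isBigO' 2).const_mul_left d2
    exact (h1.add h2).congr_left fun x => by ring
  have hwp : (fun x : ℝ => ww α θ x + c1*(x:ℂ)) =O[𝓝[>](0:ℝ)] fun x => x :=
    (w_isBigO α θ).add hx1C
  have hsq : (fun x : ℝ => (ww α θ x)^2 - c1^2*(x:ℂ)^2) =O[𝓝[>](0:ℝ)] fun x => x^3 :=
    (hwm.mul hwp).congr (fun x => by ring) (fun x => by ring)
  have htay : (fun x : ℝ => (1 + ww α θ x + (ww α θ x)^2/2)
      - (1 + c1*(x:ℂ) + (d2 + c1^2/2)*(x:ℂ)^2)) =O[𝓝[>](0:ℝ)] fun x => x^3 := by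
    have := (w_expand α θ).add (hsq.const_mul_left (1/2 : ℂ))
    exact this.congr_left fun x => by ring
  have total : (fun x : ℝ => Complex.exp (ww α θ x)
      - (1 + c1*(x:ℂ) + (d2 + c1^2/2)*(x:ℂ)^2)) =O[𝓝[>](0:ℝ)] fun x => x^3 :=
    ((exp_w_expand α θ).add htay).congr_left fun x => by ring
  refine Filter.EventuallyEq.trans_isBigO ?_ total
  filter_upwards [F_eq_exp_w α θ] with x hx
  rw [hx]

/-- The first three coefficients of the expansion
`ξ^θ (-(log ξ)/(1-ξ))^(-α) = ∑ γ_i (1-ξ)^i` are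
`γ₀ = 1`, `γ₁ = -α/2 - θ`, `γ₂ = (α+2θ)²/8 - (5α+12θ)/24`. -/
theorem stmt1 (α : ℂ) (θ : ℝ) (γ : ℕ → ℂ) (r : ℝ) (hr : 0 < r) (hr1 : r < 1)
    (hγ : ∀ ξ : ℝ, ξ ∈ Set.Ioo (1 - r) 1 →
      HasSum (fun i : ℕ => γ i * ((1 : ℂ) - (ξ : ℂ)) ^ i)
        ((ξ : ℂ) ^ (θ : ℂ) * ((((-Real.log ξ) / (1 - ξ) : ℝ)) : ℂ) ^ (-α))) :
    γ 0 = 1 ∧ γ 1 = -α / 2 - (θ : ℂ) ∧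
      γ 2 = (α + 2 * (θ : ℂ)) ^ 2 / 8 - (5 * α + 12 * (θ : ℂ)) / 24 := by
  set x0 : ℝ := r/2 with hx0def
  have hx00 : 0 < x0 := by positivity
  have hx0r : x0 < r := by rw [hx0def]; linarith
  -- summability at x0 gives a uniform bound on coefficients
  have hmem : (1 - x0) ∈ Set.Ioo (1-r) 1 := ⟨by linarith, by linarith⟩
  have hsum0 := hγ _ hmem
  have hxx : ((1:ℂ) - ((1 - x0 : ℝ):ℂ)) = (x0:ℂ) := by push_cast; ring
  simp only [hxx] at hsum0
  have htend := hsum0.summable.tendsto_atTop_zero.norm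
  rw [norm_zero] at htend
  obtain ⟨C, hC⟩ := htend.bddAbove_range
  rw [mem_upperBounds] at hC
  have hC' : ∀ i : ℕ, ‖γ i * (x0:ℂ)^i‖ ≤ C := fun i => hC _ ⟨i, rfl⟩
  have hC0 : 0 ≤ C := le_trans (norm_nonneg _) (hC' 0)
  -- series-side estimate
  have h1 : (fun x : ℝ => (γ 0 + γ 1 * (x:ℂ) + γ 2 * (x:ℂ)^2)
      - ((1-x : ℝ) : ℂ)^(θ:ℂ) * ((((-Real.log (1-x)) / x : ℝ)) : ℂ)^(-α))
      =O[𝓝[>](0:ℝ)] fun x => x^3 := by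
    rw [isBigO_iff]
    refine ⟨2*C/x0^3, ?_⟩
    filter_upwards [Ioo_mem_nhdsGT_of_mem
      (⟨le_refl 0, by positivity⟩ : (0:ℝ) ∈ Ico (0:ℝ) (x0/2))] with x hx
    rcases hx with ⟨hxp, hxh⟩
    have hxr : x < r := by linarith
    have hs := hγ (1-x) ⟨by linarith, by linarith⟩
    rw [show (1:ℝ) - (1-x) = x by ring] at hs
    simp only [show ((1:ℂ) - ((1-x : ℝ):ℂ)) = (x:ℂ) by push_cast; ring] at hs
    have tail : HasSum (fun i => γ (i+3) * (x:ℂ)^(i+3))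
        (((1-x : ℝ) : ℂ)^(θ:ℂ) * ((((-Real.log (1-x)) / x : ℝ)) : ℂ)^(-α)
          - ∑ i ∈ Finset.range 3, γ i * (x:ℂ)^i) := by
      exact (hasSum_nat_add_iff (f := fun i => γ i * (x:ℂ)^i) 3).mpr (by simpa using hs)
    set q : ℝ := x/x0 with hqdef
    have hq0 : 0 < q := by positivity
    have hqh : q ≤ 1/2 := by
      rw [hqdef, div_le_div_iff₀ hx00 (by norm_num)]
      linarith
    have hbound : ∀ i : ℕ, ‖γ (i+3) * (x:ℂ)^(i+3)‖ ≤ (C * q^3) * (1/2:ℝ)^i := by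
      intro i
      have hx_eq : x = x0 * q := by rw [hqdef]; field_simp
      have e1 : ‖γ (i+3) * (x:ℂ)^(i+3)‖ = ‖γ (i+3) * (x0:ℂ)^(i+3)‖ * q^(i+3) := by
        rw [hx_eq]
        push_cast
        rw [mul_pow, ← mul_assoc, norm_mul, norm_mul]
        congr 1
        rw [norm_pow, Complex.norm_real, Real.norm_eq_abs, abs_of_pos hq0]
      rw [e1]
      calc ‖γ (i+3) * (x0:ℂ)^(i+3)‖ * q^(i+3) ≤ C * q^(i+3) := by
            apply mul_le_mul_of_nonneg_right (hC' (i+3)) (by positivity)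
        _ = (C * q^3) * q^i := by ring
        _ ≤ (C * q^3) * (1/2:ℝ)^i := by
            apply mul_le_mul_of_nonneg_left (pow_le_pow_left₀ hq0.le hqh i) (by positivity)
    have geom : HasSum (fun i : ℕ => (C * q^3) * (1/2:ℝ)^i) ((C * q^3) * 2) := by
      have := (hasSum_geometric_of_lt_one (by norm_num) (by norm_num : (1/2:ℝ) < 1)).mul_left
        (C * q^3)
      norm_num at this
      exact this
    have hnorm := tsum_of_norm_bounded geom hbound
    rw [tail.tsum_eq] at hnorm
    have hsum3 : (∑ i ∈ Finset.range 3, γ i * (x:ℂ)^i)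
        = γ 0 + γ 1 * (x:ℂ) + γ 2 * (x:ℂ)^2 := by
      simp [Finset.sum_range_succ]
    rw [hsum3] at hnorm
    rw [norm_sub_rev]
    calc ‖((1-x : ℝ) : ℂ)^(θ:ℂ) * ((((-Real.log (1-x)) / x : ℝ)) : ℂ)^(-α)
          - (γ 0 + γ 1 * (x:ℂ) + γ 2 * (x:ℂ)^2)‖ ≤ (C * q^3) * 2 := hnorm
      _ = 2*C/x0^3 * x^3 := by rw [hqdef]; field_simp
      _ = 2*C/x0^3 * ‖x^3‖ := by rw [Real.norm_eq_abs, abs_of_pos (by positivity)]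
  have h2 := Fside α θ
  have hmain := (h1.add h2).congr_left (f₂ := fun x : ℝ =>
      (γ 0 - 1) + (γ 1 - (-(θ:ℂ) - α/2)) * (x:ℂ)
        + (γ 2 - ((-(θ:ℂ)/2 - 5*α/24) + (-(θ:ℂ) - α/2)^2/2)) * (x:ℂ)^2)
    (fun x => by ring)
  obtain ⟨ha, hb, hc⟩ := coeffs_zero hmain
  refine ⟨by linear_combination ha, by linear_combination hb, by linear_combination hc⟩
end

section
/- Let $h > 0$, $\alpha \in \mathbb{R}$, $\theta \in \mathbb{R}$, and consider the generating function $\omega(\xi) = (1-\xi)^{-\alpha}\left[\frac{-\alpha-2q}{2(p-q)} + \frac{2p+\alpha}{2(p-q)}\xi^{p-q}\right]$ with integers $p > q$ and shift $\theta = p$. Then $h^{\alpha} e^{p h} \omega(e^{-h}) = 1 + O(h^2)$ as $h \to 0^+$, i.e., the WSGL operator is consistent of order 2. -/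
open Filter Topology Asymptotics

lemma aux_exp2 {t : ℝ} (ht : |t| ≤ 1) : |Real.exp t - (1 + t)| ≤ t ^ 2 := by
  have h := Real.exp_bound ht (n := 2) (by norm_num)
  simp [Finset.sum_range_succ] at h
  calc |Real.exp t - (1 + t)| ≤ |t| ^ 2 * (3 / (2 * 2)) := by
        convert h using 2 <;> norm_num [Nat.factorial]
    _ ≤ t ^ 2 := by rw [sq_abs]; nlinarith [sq_nonneg t]

lemma aux_exp3 {x : ℝ} (h0 : 0 ≤ x) (h1 : x ≤ 1) :
    Real.exp x - Real.exp (-x) ≤ 2 * x + x ^ 3 := by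
  have hx : |x| ≤ 1 := by rwa [abs_of_nonneg h0]
  have hx' : |(-x)| ≤ 1 := by rwa [abs_neg]
  have h2 := Real.exp_bound hx (n := 3) (by norm_num)
  have h3 := Real.exp_bound hx' (n := 3) (by norm_num)
  simp [Finset.sum_range_succ, Nat.factorial] at h2 h3
  rw [abs_of_nonneg h0] at h2 h3
  have h2' := abs_sub_le_iff.1 h2
  have h3' := abs_sub_le_iff.1 h3
  nlinarith [h2'.1, h2'.2, h3'.1, h3'.2, pow_nonneg h0 3]

lemma aux_sinh_lb {x : ℝ} (h0 : 0 ≤ x) : 2 * x ≤ Real.exp x - Real.exp (-x) := by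
  have := Real.self_le_sinh_iff.2 h0
  rw [Real.sinh_eq] at this
  linarith

lemma expand_aux (A B u v w z s t1 t2 : ℝ) (h1 : u + v + w = s + t1)
    (h2 : u + v + w + z = s + t2) :
    Real.exp u * Real.exp v * (Real.exp w * (A + B * Real.exp z))
      = Real.exp s * (A * Real.exp t1 + B * Real.exp t2) := by
  have e1 : Real.exp u * Real.exp v * Real.exp w = Real.exp s * Real.exp t1 := by
    rw [← Real.exp_add, ← Real.exp_add, ← Real.exp_add, h1]
  have e2 : Real.exp u * Real.exp v * Real.exp w * Real.exp z
      = Real.exp s * Real.exp t2 := by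
    rw [← Real.exp_add, ← Real.exp_add, ← Real.exp_add, ← Real.exp_add, h2]
  calc Real.exp u * Real.exp v * (Real.exp w * (A + B * Real.exp z))
      = (Real.exp u * Real.exp v * Real.exp w) * A
        + (Real.exp u * Real.exp v * Real.exp w * Real.exp z) * B := by ring
    _ = Real.exp s * (A * Real.exp t1 + B * Real.exp t2) := by rw [e2, e1]; ring

lemma key_eq (α : ℝ) (p q : ℤ) {h : ℝ} (h0 : 0 < h) :
    h ^ α * Real.exp (p * h) *
        ((1 - Real.exp (-h)) ^ (-α) *
          ((-α - 2 * q) / (2 * (p - q)) +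
            (2 * p + α) / (2 * (p - q)) * Real.exp (-h) ^ (p - q)))
    = Real.exp (-(α * Real.log ((1 - Real.exp (-h)) / h * Real.exp (h / 2)))) *
        ((-α - 2 * q) / (2 * (p - q)) * Real.exp (((p : ℝ) + α / 2) * h) +
         (2 * p + α) / (2 * (p - q)) * Real.exp (((q : ℝ) + α / 2) * h)) := by
  have hexp : Real.exp (-h) < 1 := by
    rw [Real.exp_lt_one_iff]; linarith
  have he1 : 0 < 1 - Real.exp (-h) := by linarith
  have hzpow : Real.exp (-h) ^ (p - q) = Real.exp (-h * ((p : ℝ) - q)) := by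
    rw [← Real.rpow_intCast (Real.exp (-h)) (p - q), ← Real.exp_mul]
    push_cast; ring_nf
  have hlog : Real.log ((1 - Real.exp (-h)) / h * Real.exp (h / 2))
      = Real.log (1 - Real.exp (-h)) - Real.log h + h / 2 := by
    rw [Real.log_mul (by positivity) (Real.exp_ne_zero _),
      Real.log_div he1.ne' h0.ne', Real.log_exp]
  have hrh : h ^ α = Real.exp (Real.log h * α) := Real.rpow_def_of_pos h0 α
  have hre : (1 - Real.exp (-h)) ^ (-α)
      = Real.exp (Real.log (1 - Real.exp (-h)) * (-α)) := Real.rpow_def_of_pos he1 _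
  rw [hzpow, hlog, hrh, hre]
  exact expand_aux _ _ _ _ _ _ _ _ _ (by ring) (by ring)

/-- Consistency of order 2 of the WSGL operator with shift `θ = p`:
`h^α e^{ph} ω(e^{-h}) = 1 + O(h²)` as `h → 0⁺`. -/
theorem stmt2 (α : ℝ) (p q : ℤ) (hpq : q < p) :
    (fun h : ℝ => h ^ α * Real.exp (p * h) *
        ((1 - Real.exp (-h)) ^ (-α) *
          ((-α - 2 * q) / (2 * (p - q)) +
            (2 * p + α) / (2 * (p - q)) * Real.exp (-h) ^ (p - q))) - 1)
      =O[𝓝[>] (0 : ℝ)] fun h : ℝ => h ^ (2 : ℕ) := by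
  have hpq' : (q : ℝ) < p := by exact_mod_cast hpq
  obtain ⟨A, hA⟩ : ∃ x : ℝ, x = (-α - 2 * (q : ℝ)) / (2 * ((p : ℝ) - q)) := ⟨_, rfl⟩
  obtain ⟨B, hB⟩ : ∃ x : ℝ, x = (2 * (p : ℝ) + α) / (2 * ((p : ℝ) - q)) := ⟨_, rfl⟩
  obtain ⟨a, ha⟩ : ∃ x : ℝ, x = (p : ℝ) + α / 2 := ⟨_, rfl⟩
  obtain ⟨b, hb⟩ : ∃ x : ℝ, x = (q : ℝ) + α / 2 := ⟨_, rfl⟩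
  rw [← hA, ← hB]
  have hne : (2 * ((p : ℝ) - q)) ≠ 0 := by
    have : (0:ℝ) < (p:ℝ) - q := by linarith
    positivity
  have hAB : A + B = 1 := by rw [hA, hB, ← add_div, div_eq_one_iff_eq hne]; ring
  have hab : A * a + B * b = 0 := by rw [hA, hB, ha, hb]; field_simp; ring
  obtain ⟨C1, hC1⟩ : ∃ x : ℝ, x = |A| * a ^ 2 + |B| * b ^ 2 := ⟨_, rfl⟩
  have hC1nn : 0 ≤ C1 := by rw [hC1]; positivity
  obtain ⟨δ, hδdef⟩ : ∃ x : ℝ,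
      x = min 1 (min (1 / (1 + |a| + |b|)) (1 / (1 + |α|))) := ⟨_, rfl⟩
  have hδ : 0 < δ := by rw [hδdef]; positivity
  rw [isBigO_iff]
  refine ⟨Real.exp |α| * C1 + 2 * |α|, ?_⟩
  filter_upwards [Ioo_mem_nhdsGT hδ] with h hh
  obtain ⟨h0, hhδ⟩ := hh
  rw [hδdef] at hhδ
  have hh1 : h ≤ 1 := le_trans hhδ.le (min_le_left _ _)
  have hha : h ≤ 1 / (1 + |a| + |b|) :=
    le_trans hhδ.le (le_trans (min_le_right _ _) (min_le_left _ _))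
  have hhα : h ≤ 1 / (1 + |α|) :=
    le_trans hhδ.le (le_trans (min_le_right _ _) (min_le_right _ _))
  have heq := key_eq α p q h0
  rw [← hA, ← hB, ← ha, ← hb] at heq
  obtain ⟨L, hL⟩ : ∃ x : ℝ,
      x = Real.log ((1 - Real.exp (-h)) / h * Real.exp (h / 2)) := ⟨_, rfl⟩
  rw [← hL] at heq
  -- bounds on the ratio ρ
  have hsplit : (1 - Real.exp (-h)) / h * Real.exp (h / 2)
      = (Real.exp (h / 2) - Real.exp (-(h / 2))) / h := by
    rw [div_mul_eq_mul_div, sub_mul, one_mul, ← Real.exp_add,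
      show -h + h / 2 = -(h / 2) by ring]
  have hlb := aux_sinh_lb (x := h / 2) (by linarith)
  have hub := aux_exp3 (x := h / 2) (by linarith) (by linarith)
  have hρ1 : 1 ≤ (1 - Real.exp (-h)) / h * Real.exp (h / 2) := by
    rw [hsplit, le_div_iff₀ h0]; linarith
  have hρ2 : (1 - Real.exp (-h)) / h * Real.exp (h / 2) ≤ 1 + h ^ 2 := by
    rw [hsplit, div_le_iff₀ h0]
    have hp3 : (0:ℝ) ≤ h ^ 3 := pow_nonneg h0.le 3
    linarith
  have hL0 : 0 ≤ L := hL ▸ Real.log_nonneg hρ1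
  have hL2 : L ≤ h ^ 2 := by
    have h1 := Real.log_le_sub_one_of_pos
      (x := (1 - Real.exp (-h)) / h * Real.exp (h / 2)) (by linarith)
    rw [← hL] at h1
    linarith
  -- bound on v - 1
  have habs : (0 : ℝ) < 1 + |a| + |b| := by positivity
  have hha' : h * (1 + |a| + |b|) ≤ 1 := by rwa [le_div_iff₀ habs] at hha
  have hah : |a * h| ≤ 1 := by
    rw [abs_mul, abs_of_pos h0]
    have h1 : |a| * h ≤ (1 + |a| + |b|) * h :=
      mul_le_mul_of_nonneg_right (by linarith [abs_nonneg b]) h0.le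
    linarith
  have hbh : |b * h| ≤ 1 := by
    rw [abs_mul, abs_of_pos h0]
    have h1 : |b| * h ≤ (1 + |a| + |b|) * h :=
      mul_le_mul_of_nonneg_right (by linarith [abs_nonneg a]) h0.le
    linarith
  have hva := aux_exp2 hah
  have hvb := aux_exp2 hbh
  have hv : |A * Real.exp (a * h) + B * Real.exp (b * h) - 1| ≤ C1 * h ^ 2 := by
    have hid : A * Real.exp (a * h) + B * Real.exp (b * h) - 1
        = A * (Real.exp (a * h) - (1 + a * h)) + B * (Real.exp (b * h) - (1 + b * h)) := by
      linear_combination hAB + h * hab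
    rw [hid]
    calc |A * (Real.exp (a * h) - (1 + a * h)) + B * (Real.exp (b * h) - (1 + b * h))|
        ≤ |A| * |Real.exp (a * h) - (1 + a * h)| + |B| * |Real.exp (b * h) - (1 + b * h)| := by
          refine (abs_add_le _ _).trans ?_
          rw [abs_mul, abs_mul]
      _ ≤ |A| * (a * h) ^ 2 + |B| * (b * h) ^ 2 := by gcongr
      _ = C1 * h ^ 2 := by rw [hC1]; ring
  -- bounds on the exponential factor
  have hαh : (0 : ℝ) < 1 + |α| := by positivity
  have hhα' : h * (1 + |α|) ≤ 1 := by rwa [le_div_iff₀ hαh] at hhα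
  have hh2 : h ^ 2 ≤ h := by
    rw [sq]
    calc h * h ≤ 1 * h := mul_le_mul_of_nonneg_right hh1 h0.le
      _ = h := one_mul h
  have hαL : |(-(α * L))| ≤ 1 := by
    rw [abs_neg, abs_mul, abs_of_nonneg hL0]
    have h1 : |α| * L ≤ |α| * h ^ 2 := mul_le_mul_of_nonneg_left hL2 (abs_nonneg α)
    have h2 : |α| * h ^ 2 ≤ |α| * h := mul_le_mul_of_nonneg_left hh2 (abs_nonneg α)
    have h3 : |α| * h ≤ (1 + |α|) * h :=
      mul_le_mul_of_nonneg_right (by linarith [abs_nonneg α]) h0.le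
    linarith [hhα']
  have hexpL : Real.exp (-(α * L)) ≤ Real.exp |α| := by
    apply Real.exp_le_exp.2
    have h1 : -(α * L) ≤ |α * L| := neg_le_abs _
    rw [abs_mul, abs_of_nonneg hL0] at h1
    have h2 : |α| * L ≤ |α| * h ^ 2 := mul_le_mul_of_nonneg_left hL2 (abs_nonneg α)
    have h3 : h ^ 2 ≤ 1 := by linarith
    have h4 : |α| * h ^ 2 ≤ |α| * 1 := mul_le_mul_of_nonneg_left h3 (abs_nonneg α)
    linarith
  have hexpL1 : |Real.exp (-(α * L)) - 1| ≤ 2 * (|α| * h ^ 2) := by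
    refine (Real.abs_exp_sub_one_le hαL).trans ?_
    rw [abs_neg, abs_mul, abs_of_nonneg hL0]
    have h1 : |α| * L ≤ |α| * h ^ 2 := mul_le_mul_of_nonneg_left hL2 (abs_nonneg α)
    linarith
  -- conclude
  rw [heq]
  have hdecomp : Real.exp (-(α * L)) * (A * Real.exp (a * h) + B * Real.exp (b * h)) - 1
      = Real.exp (-(α * L)) * (A * Real.exp (a * h) + B * Real.exp (b * h) - 1)
        + (Real.exp (-(α * L)) - 1) := by ring
  rw [hdecomp, Real.norm_eq_abs, Real.norm_eq_abs,
    abs_of_nonneg (by positivity : (0:ℝ) ≤ h ^ 2)]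
  calc |Real.exp (-(α * L)) * (A * Real.exp (a * h) + B * Real.exp (b * h) - 1)
        + (Real.exp (-(α * L)) - 1)|
      ≤ Real.exp (-(α * L)) * |A * Real.exp (a * h) + B * Real.exp (b * h) - 1|
        + |Real.exp (-(α * L)) - 1| := by
        refine (abs_add_le _ _).trans ?_
        rw [abs_mul, Real.abs_exp]
    _ ≤ Real.exp |α| * (C1 * h ^ 2) + 2 * (|α| * h ^ 2) := by gcongr
    _ = (Real.exp |α| * C1 + 2 * |α|) * h ^ 2 := by ring
end

section
/- Let $\alpha \in (0,1)$ and $\theta \in \left[\frac{\alpha}{2} - \frac{1-\alpha}{1+\alpha}, \frac{\alpha}{2}\right]$. Define $\omega_0 = 1 + \frac{\alpha}{2} - \theta$ and $\omega_k = \left(1+\frac{\alpha}{2}-\theta\right)\kappa_k + \left(\theta - \frac{\alpha}{2}\right)\kappa_{k-1}$ for $k \geq 1$, where $\kappa_k = (-1)^k\binom{\alpha}{k}$. Then $\omega_0 > 0$ and $\omega_k \leq 0$ for all $k \geq 1$. -/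
/-
With `a = α/2 - θ`, the recursion `κ_{k+1} = κ_k (k - α)/(k + 1)` turns the coefficients into
`ω_{k+1} = κ_k (k - α - a(1 + α))/(k + 1)`. For `k = 0` this is `-(α + a(1 + α)) ≤ 0` since `a ≥ 0`.
For `k ≥ 1` we have `κ_k < 0`, and the bracket is at least `1 - α - a(1 + α)`, which is
nonnegative exactly when `θ ≥ α/2 - (1 - α)/(1 + α)`.
-/

noncomputable def genBinom (α : ℝ) (k : ℕ) : ℝ :=
  (∏ j ∈ Finset.range k, (α - j)) / (Nat.factorial k)

noncomputable def kappa (α : ℝ) (k : ℕ) : ℝ := (-1 : ℝ) ^ k * genBinom α k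

/-- Coefficients of `ω(ξ) = (1-ξ)^α [1 + (α/2 - θ)(1-ξ)]`. -/
noncomputable def omegaCoeff (α θ : ℝ) : ℕ → ℝ
  | 0 => 1 + α / 2 - θ
  | (k + 1) => (1 + α / 2 - θ) * kappa α (k + 1) + (θ - α / 2) * kappa α k

lemma kappa_zero (α : ℝ) : kappa α 0 = 1 := by
  simp [kappa, genBinom]

lemma kappa_succ (α : ℝ) (k : ℕ) :
    kappa α (k + 1) = kappa α k * ((k : ℝ) - α) / (k + 1) := by
  have hk : (k : ℝ) + 1 ≠ 0 := by positivity
  have hfact : (Nat.factorial k : ℝ) ≠ 0 := mod_cast Nat.factorial_ne_zero k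
  simp only [kappa, genBinom, Finset.prod_range_succ, Nat.factorial_succ, pow_succ]
  push_cast
  field_simp
  ring

lemma kappa_neg {α : ℝ} (h0 : 0 < α) (h1 : α < 1) {k : ℕ} (hk : 1 ≤ k) : kappa α k < 0 := by
  induction k, hk using Nat.le_induction with
  | base => simp [kappa_succ, kappa_zero, h0]
  | succ n hn ih =>
    have hn' : (1 : ℝ) ≤ n := mod_cast hn
    rw [kappa_succ]
    exact div_neg_of_neg_of_pos (mul_neg_of_neg_of_pos ih (by linarith)) (by positivity)

lemma omegaCoeff_succ (α θ : ℝ) (k : ℕ) :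
    omegaCoeff α θ (k + 1) =
      kappa α k * ((k : ℝ) - α - (α / 2 - θ) * (1 + α)) / (k + 1) := by
  have hk : (k : ℝ) + 1 ≠ 0 := by positivity
  rw [omegaCoeff, kappa_succ]
  field_simp
  ring

/-- For `α ∈ (0,1)` and `θ ∈ [α/2 - (1-α)/(1+α), α/2]`:
`ω₀ > 0` and `ω_k ≤ 0` for all `k ≥ 1`. -/
theorem stmt6 (α θ : ℝ) (hα : α ∈ Set.Ioo (0 : ℝ) 1)
    (hθ : θ ∈ Set.Icc (α / 2 - (1 - α) / (1 + α)) (α / 2)) :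
    0 < omegaCoeff α θ 0 ∧ ∀ k : ℕ, 1 ≤ k → omegaCoeff α θ k ≤ 0 := by
  obtain ⟨hα0, hα1⟩ := hα
  obtain ⟨hθ_lo, hθ_hi⟩ := hθ
  have hslack : (α / 2 - θ) * (1 + α) ≤ 1 - α :=
    (le_div_iff₀ (by linarith)).mp (by linarith)
  refine ⟨by simp only [omegaCoeff]; linarith, fun k hk => ?_⟩
  obtain ⟨m, rfl⟩ := Nat.exists_eq_add_of_le' hk
  rw [omegaCoeff_succ]
  refine div_nonpos_of_nonpos_of_nonneg ?_ (by positivity)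
  rcases Nat.eq_zero_or_pos m with rfl | hm
  · rw [kappa_zero, one_mul]
    nlinarith
  · have hm' : (1 : ℝ) ≤ m := mod_cast hm
    exact mul_nonpos_of_nonpos_of_nonneg (kappa_neg hα0 hα1 hm).le (by linarith)
end

section
/- Let $\alpha \leq 3$ and set $\theta = \frac{1-\alpha}{2} - \frac{1}{2}\sqrt{1-\frac{\alpha}{3}}$. Then the generating function $\omega(\xi) = (1-\xi)^{-\alpha}\left[1-\left(\frac{\alpha}{2}+\theta\right)(1-\xi)\right]$ satisfies $h^{\alpha}e^{\theta h}\omega(e^{-h}) = 1 + O(h^3)$ as $h \to 0^+$, i.e., this second-order-looking formula is actually consistent of order 3 at this superconvergence shift. -/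
open Filter Topology Asymptotics

private lemma hpow_O {m n : ℕ} (hnm : n ≤ m) :
    (fun h : ℝ => h ^ m) =O[𝓝[>] (0:ℝ)] fun h => h ^ n := by
  rw [isBigO_iff]
  refine ⟨1, ?_⟩
  filter_upwards [Ioo_mem_nhdsGT_of_mem (Set.left_mem_Ico.2 one_pos)] with h hh
  rw [one_mul, norm_pow, norm_pow]
  exact pow_le_pow_of_le_one (norm_nonneg _) (by rw [Real.norm_eq_abs, abs_of_pos hh.1]; exact hh.2.le) hnm

private lemma constpow_O (b : ℝ) {m n : ℕ} (hnm : n ≤ m) :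
    (fun h : ℝ => b * h ^ m) =O[𝓝[>] (0:ℝ)] fun h => h ^ n :=
  ((hpow_O hnm).const_mul_left b)

private lemma expO4 :
    (fun h : ℝ => Real.exp (-h) - (1 - h + h ^ 2 / 2 - h ^ 3 / 6)) =O[𝓝[>] (0:ℝ)]
      fun h => h ^ (4:ℕ) := by
  rw [isBigO_iff]
  refine ⟨5 / (24 * 4), ?_⟩
  filter_upwards [Ioo_mem_nhdsGT_of_mem (Set.left_mem_Ico.2 one_pos)] with h hh
  have h1 : |(-h)| ≤ 1 := by rw [abs_neg, abs_of_pos hh.1]; exact hh.2.le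
  have := Real.exp_bound h1 (n := 4) (by norm_num)
  have hsum : ∑ m ∈ Finset.range 4, (-h) ^ m / (m.factorial : ℝ)
      = 1 - h + h ^ 2 / 2 - h ^ 3 / 6 := by
    simp [Finset.sum_range_succ, Nat.factorial]
    ring
  rw [hsum] at this
  rw [Real.norm_eq_abs, Real.norm_eq_abs]
  calc |Real.exp (-h) - (1 - h + h ^ 2 / 2 - h ^ 3 / 6)|
      ≤ |(-h)| ^ 4 * ((5:ℕ) / ((4:ℕ).factorial * (4:ℕ))) := this
    _ = 5 / (24 * 4) * |h ^ 4| := by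
        rw [abs_neg, abs_pow]
        norm_num [Nat.factorial]
        ring

private noncomputable def uu (h : ℝ) : ℝ := 1 - Real.exp (-h)
private noncomputable def xx (h : ℝ) : ℝ := 1 - uu h / h

private lemma uO4 :
    (fun h : ℝ => uu h - (h - h ^ 2 / 2 + h ^ 3 / 6)) =O[𝓝[>] (0:ℝ)] fun h => h ^ (4:ℕ) := by
  have : (fun h : ℝ => uu h - (h - h ^ 2 / 2 + h ^ 3 / 6))
      = fun h : ℝ => -(Real.exp (-h) - (1 - h + h ^ 2 / 2 - h ^ 3 / 6)) := by
    funext h; simp [uu]; ring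
  rw [this]
  exact expO4.neg_left

private lemma uO3 :
    (fun h : ℝ => uu h - (h - h ^ 2 / 2)) =O[𝓝[>] (0:ℝ)] fun h => h ^ (3:ℕ) := by
  have : (fun h : ℝ => uu h - (h - h ^ 2 / 2))
      = fun h : ℝ => (uu h - (h - h ^ 2 / 2 + h ^ 3 / 6)) + (1/6) * h ^ 3 := by
    funext h; ring
  rw [this]
  exact (uO4.trans (hpow_O (by norm_num))).add (constpow_O (1/6) le_rfl)

private lemma uO1 : uu =O[𝓝[>] (0:ℝ)] fun h : ℝ => h ^ (1:ℕ) := by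
  have : uu = fun h : ℝ => (uu h - (h - h ^ 2 / 2)) + (1 * h ^ 1 + (-1/2) * h ^ 2) := by
    funext h; ring
  rw [this]
  exact ((uO3.trans (hpow_O (by norm_num))).add
    ((constpow_O 1 le_rfl).add (constpow_O (-1/2) (by norm_num))))

private lemma xO2 :
    (fun h : ℝ => xx h - (h / 2 - h ^ 2 / 6)) =O[𝓝[>] (0:ℝ)] fun h => h ^ (3:ℕ) := by
  have h1 : (fun h : ℝ => (uu h - (h - h ^ 2 / 2 + h ^ 3 / 6)) * (-h⁻¹))
      =O[𝓝[>] (0:ℝ)] fun h : ℝ => h ^ (4:ℕ) * (-h⁻¹) :=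
    uO4.mul (isBigO_refl _ _)
  have h2 : (fun h : ℝ => (uu h - (h - h ^ 2 / 2 + h ^ 3 / 6)) * (-h⁻¹))
      =ᶠ[𝓝[>] (0:ℝ)] fun h : ℝ => xx h - (h / 2 - h ^ 2 / 6) := by
    filter_upwards [self_mem_nhdsWithin] with h (hh : h ∈ Set.Ioi (0:ℝ))
    have hne : h ≠ 0 := ne_of_gt hh
    simp only [xx]
    field_simp
    ring
  have h3 : (fun h : ℝ => h ^ (4:ℕ) * (-h⁻¹)) =O[𝓝[>] (0:ℝ)] fun h : ℝ => h ^ (3:ℕ) := by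
    rw [isBigO_iff]
    refine ⟨1, ?_⟩
    filter_upwards [self_mem_nhdsWithin] with h (hh : h ∈ Set.Ioi (0:ℝ))
    have hne : (h:ℝ) ≠ 0 := ne_of_gt hh
    have : h ^ (4:ℕ) * (-h⁻¹) = -(h ^ (3:ℕ)) := by field_simp
    rw [this, norm_neg, one_mul]
  exact (h2.symm.trans_isBigO (h1.trans h3))

private lemma xO1 : xx =O[𝓝[>] (0:ℝ)] fun h : ℝ => h ^ (1:ℕ) := by
  have : xx = fun h : ℝ => (xx h - (h / 2 - h ^ 2 / 6)) + ((1/2) * h ^ 1 + (-1/6) * h ^ 2) := by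
    funext h; ring
  rw [this]
  exact ((xO2.trans (hpow_O (by norm_num))).add
    ((constpow_O (1/2) le_rfl).add (constpow_O (-1/6) (by norm_num))))

private lemma sqO {f : ℝ → ℝ} {a b : ℝ}
    (hf : (fun h : ℝ => f h - (a * h + b * h ^ 2)) =O[𝓝[>] (0:ℝ)] fun h => h ^ (3:ℕ)) :
    (fun h : ℝ => f h ^ 2 - a ^ 2 * h ^ 2) =O[𝓝[>] (0:ℝ)] fun h => h ^ (3:ℕ) := by
  have hf1 : (fun h : ℝ => f h - a * h) =O[𝓝[>] (0:ℝ)] fun h => h ^ (2:ℕ) := by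
    have : (fun h : ℝ => f h - a * h)
        = fun h : ℝ => (f h - (a * h + b * h ^ 2)) + b * h ^ 2 := by funext h; ring
    rw [this]
    exact (hf.trans (hpow_O (by norm_num))).add (constpow_O b le_rfl)
  have hf2 : (fun h : ℝ => f h + a * h) =O[𝓝[>] (0:ℝ)] fun h => h ^ (1:ℕ) := by
    have : (fun h : ℝ => f h + a * h)
        = fun h : ℝ => ((f h - (a * h + b * h ^ 2)) + ((2*a) * h ^ 1 + b * h ^ 2)) := by
      funext h; ring
    rw [this]
    exact (hf.trans (hpow_O (by norm_num))).add
      ((constpow_O (2*a) le_rfl).add (constpow_O b (by norm_num)))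
  have := hf1.mul hf2
  have he : (fun h : ℝ => (f h - a * h) * (f h + a * h))
      = fun h : ℝ => f h ^ 2 - a ^ 2 * h ^ 2 := by funext h; ring
  have hg : (fun h : ℝ => (h:ℝ) ^ (2:ℕ) * h ^ (1:ℕ)) = fun h : ℝ => h ^ (3:ℕ) := by
    funext h; ring
  rwa [he, hg] at this

private lemma logO {f : ℝ → ℝ} (hf : f =O[𝓝[>] (0:ℝ)] fun h : ℝ => h ^ (1:ℕ)) :
    (fun h : ℝ => Real.log (1 - f h) + (f h + f h ^ 2 / 2)) =O[𝓝[>] (0:ℝ)]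
      fun h => h ^ (3:ℕ) := by
  have htend : Tendsto f (𝓝[>] (0:ℝ)) (𝓝 0) := by
    refine hf.trans_tendsto ?_
    have : Tendsto (fun h : ℝ => h) (𝓝[>] (0:ℝ)) (𝓝 0) :=
      tendsto_id.mono_left nhdsWithin_le_nhds
    simpa using this.pow 1
  have hsm : ∀ᶠ h in 𝓝[>] (0:ℝ), |f h| ≤ 1/2 := by
    have := htend.eventually (eventually_abs_sub_lt 0 (by norm_num : (0:ℝ) < 1/2))
    filter_upwards [this] with h hh
    simpa using hh.le
  have key : (fun h : ℝ => Real.log (1 - f h) + (f h + f h ^ 2 / 2)) =O[𝓝[>] (0:ℝ)]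
      fun h => f h ^ 3 := by
    rw [isBigO_iff]
    refine ⟨2, ?_⟩
    filter_upwards [hsm] with h hh
    have hlt : |f h| < 1 := lt_of_le_of_lt hh (by norm_num)
    have hb := Real.abs_log_sub_add_sum_range_le hlt 2
    have hsum : ∑ i ∈ Finset.range 2, f h ^ (i + 1) / ((i:ℝ) + 1) = f h + f h ^ 2 / 2 := by
      simp [Finset.sum_range_succ]
      norm_num
    rw [hsum] at hb
    have h1 : |f h| ^ 3 / (1 - |f h|) ≤ 2 * |f h ^ 3| := by
      rw [abs_pow]
      rw [div_le_iff₀ (by linarith)]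
      nlinarith [mul_nonneg (pow_nonneg (abs_nonneg (f h)) 3) (by linarith : (0:ℝ) ≤ 1 - 2 * |f h|)]
    calc ‖Real.log (1 - f h) + (f h + f h ^ 2 / 2)‖
        = |f h + f h ^ 2 / 2 + Real.log (1 - f h)| := by rw [Real.norm_eq_abs]; ring_nf
      _ ≤ |f h| ^ (2 + 1) / (1 - |f h|) := hb
      _ = |f h| ^ 3 / (1 - |f h|) := by norm_num
      _ ≤ 2 * |f h ^ 3| := h1
      _ = 2 * ‖f h ^ 3‖ := by rw [Real.norm_eq_abs]
  refine key.trans ?_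
  have := hf.pow 3
  simpa using this
/-- At the superconvergence shift `θ = (1-α)/2 - (1/2)√(1-α/3)` (for `α ≤ 3`),
`ω(ξ) = (1-ξ)^{-α}[1-(α/2+θ)(1-ξ)]` satisfies `h^α e^{θh} ω(e^{-h}) = 1 + O(h³)`. -/
theorem stmt12 (α θ : ℝ) (hα : α ≤ 3)
    (hθ : θ = (1 - α) / 2 - Real.sqrt (1 - α / 3) / 2) :
    (fun h : ℝ => h ^ α * Real.exp (θ * h) *
        ((1 - Real.exp (-h)) ^ (-α) *
          (1 - (α / 2 + θ) * (1 - Real.exp (-h)))) - 1)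
      =O[𝓝[>] (0 : ℝ)] fun h : ℝ => h ^ (3 : ℕ) := by
  have hs2 : Real.sqrt (1 - α / 3) ^ 2 = 1 - α / 3 := Real.sq_sqrt (by linarith)
  set c : ℝ := α / 2 + θ with hc
  clear_value c
  have hquad : c ^ 2 - c = -α / 12 := by
    rw [hc, hθ]; linear_combination hs2 / 4
  -- tendsto facts
  have hid : Tendsto (fun h : ℝ => h ^ (1:ℕ)) (𝓝[>] (0:ℝ)) (𝓝 0) := by
    exact Tendsto.congr (fun h => (pow_one h).symm) (tendsto_id.mono_left (nhdsWithin_le_nhds : 𝓝[>] (0:ℝ) ≤ 𝓝 0))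
  have hcu1 : (fun h : ℝ => c * uu h) =O[𝓝[>] (0:ℝ)] fun h : ℝ => h ^ (1:ℕ) :=
    uO1.const_mul_left c
  have hcut : Tendsto (fun h : ℝ => c * uu h) (𝓝[>] (0:ℝ)) (𝓝 0) := hcu1.trans_tendsto hid
  have hcusm : ∀ᶠ h in 𝓝[>] (0:ℝ), |c * uu h| ≤ 1/2 := by
    filter_upwards [hcut.eventually (eventually_abs_sub_lt 0 (by norm_num : (0:ℝ) < 1/2))]
      with h hh
    simpa using hh.le
  -- the E-terms
  have hE1 := xO2
  have hE5 : (fun h : ℝ => xx h ^ 2 - (1/2:ℝ) ^ 2 * h ^ 2) =O[𝓝[>] (0:ℝ)]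
      fun h => h ^ (3:ℕ) := by
    refine sqO (a := 1/2) (b := -1/6) ?_
    have : (fun h : ℝ => xx h - (1/2 * h + -1/6 * h ^ 2))
        = fun h : ℝ => xx h - (h / 2 - h ^ 2 / 6) := by funext h; ring
    rw [this]; exact xO2
  have hE3 := uO3
  have hE6 : (fun h : ℝ => uu h ^ 2 - (1:ℝ) ^ 2 * h ^ 2) =O[𝓝[>] (0:ℝ)]
      fun h => h ^ (3:ℕ) := by
    refine sqO (a := 1) (b := -1/2) ?_
    have : (fun h : ℝ => uu h - (1 * h + -1/2 * h ^ 2))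
        = fun h : ℝ => uu h - (h - h ^ 2 / 2) := by funext h; ring
    rw [this]; exact uO3
  have hE2 := logO xO1
  have hE4 := logO hcu1
  -- the remainder function
  have RO3 : (fun h : ℝ =>
      α * (xx h - (h / 2 - h ^ 2 / 6)) + (α/2) * (xx h ^ 2 - (1/2:ℝ) ^ 2 * h ^ 2)
      - c * (uu h - (h - h ^ 2 / 2)) - (c^2/2) * (uu h ^ 2 - (1:ℝ) ^ 2 * h ^ 2)
      - α * (Real.log (1 - xx h) + (xx h + xx h ^ 2 / 2))
      + (Real.log (1 - c * uu h) + (c * uu h + (c * uu h) ^ 2 / 2)))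
      =O[𝓝[>] (0:ℝ)] fun h => h ^ (3:ℕ) := by
    exact (((((hE1.const_mul_left α).add (hE5.const_mul_left (α/2))).sub
      (hE3.const_mul_left c)).sub (hE6.const_mul_left (c^2/2))).sub
      (hE2.const_mul_left α)).add hE4
  -- φ coincides with the remainder eventually
  have hueq : ∀ᶠ h in 𝓝[>] (0:ℝ), 0 < h ∧ 0 < uu h ∧ 0 < 1 - c * uu h := by
    filter_upwards [self_mem_nhdsWithin, hcusm] with h hh hsm
    have hpos : (0:ℝ) < h := hh
    refine ⟨hpos, ?_, ?_⟩
    · have : Real.exp (-h) < 1 := Real.exp_lt_one_iff.2 (by linarith)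
      simp [uu]; linarith
    · have := abs_le.1 hsm
      linarith [this.2]
  have φO3 : (fun h : ℝ => θ * h + α * (Real.log h - Real.log (uu h))
      + Real.log (1 - c * uu h)) =O[𝓝[>] (0:ℝ)] fun h => h ^ (3:ℕ) := by
    refine (Filter.EventuallyEq.trans_isBigO ?_ RO3)
    filter_upwards [hueq] with h ⟨hpos, hupos, hcupos⟩
    have hlog : Real.log h - Real.log (uu h) = -Real.log (1 - xx h) := by
      have h1x : (1:ℝ) - xx h = uu h / h := by simp [xx]
      rw [h1x, Real.log_div (ne_of_gt hupos) (ne_of_gt hpos)]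
      ring
    rw [hlog]
    linear_combination (-h) * hc + (-h^2/2) * hquad
  -- φ tends to 0
  have h3t : Tendsto (fun h : ℝ => h ^ (3:ℕ)) (𝓝[>] (0:ℝ)) (𝓝 0) := by
    simpa using ((tendsto_id.mono_left (nhdsWithin_le_nhds : 𝓝[>] (0:ℝ) ≤ 𝓝 0)).pow 3)
  have hφt := φO3.trans_tendsto h3t
  have hφsm : ∀ᶠ h in 𝓝[>] (0:ℝ), |θ * h + α * (Real.log h - Real.log (uu h))
      + Real.log (1 - c * uu h)| ≤ 1 := by
    filter_upwards [hφt.eventually (eventually_abs_sub_lt 0 one_pos)] with h hh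
    simpa using hh.le
  have hexpO : (fun h : ℝ => Real.exp (θ * h + α * (Real.log h - Real.log (uu h))
      + Real.log (1 - c * uu h)) - 1) =O[𝓝[>] (0:ℝ)] fun h => h ^ (3:ℕ) := by
    refine IsBigO.trans ?_ φO3
    rw [isBigO_iff]
    refine ⟨2, ?_⟩
    filter_upwards [hφsm] with h hh
    simpa [Real.norm_eq_abs] using Real.abs_exp_sub_one_le hh
  refine Filter.EventuallyEq.trans_isBigO ?_ hexpO
  filter_upwards [hueq] with h ⟨hpos, hupos, hcupos⟩
  have e1 : h ^ α = Real.exp (Real.log h * α) := Real.rpow_def_of_pos hpos α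
  have e2 : (1 - Real.exp (-h)) ^ (-α) = Real.exp (Real.log (uu h) * (-α)) :=
    Real.rpow_def_of_pos hupos (-α)
  have e3 : (1:ℝ) - c * uu h = Real.exp (Real.log (1 - c * uu h)) :=
    (Real.exp_log hcupos).symm
  have e4 : (1:ℝ) - c * (1 - Real.exp (-h)) = 1 - c * uu h := by simp [uu]
  conv_lhs => rw [e1, e2, e4, e3, ← Real.exp_add, ← Real.exp_add, ← Real.exp_add]
  rw [sub_left_inj, Real.exp_eq_exp]
  ring
end

section
/- Let $\alpha \in \mathbb{R}$ and $\theta \in \mathbb{R}$ with $m = 1 + \frac{\alpha+2\theta}{2} - \frac{5\alpha+12\theta}{6(\alpha+2\theta)}$ (assuming $\alpha + 2\theta \neq 0$), $\lambda_2 = \frac{\alpha+2\theta}{2m}$, $\lambda_1 = 1 - \lambda_2$. If $m$ is a positive integer, then $\omega(\xi) = (1-\xi)^{-\alpha}(\lambda_1 + \lambda_2\xi^m)$ satisfies $h^{\alpha}e^{\theta h}\omega(e^{-h}) = 1 + O(h^3)$ as $h \to 0^+$. -/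
open Filter Topology Asymptotics


lemma aux_abs_small : ∀ᶠ x : ℝ in 𝓝 0, |x| ≤ 1/2 := by
  have : Tendsto (fun x : ℝ => |x|) (𝓝 0) (𝓝 0) := by
    simpa using continuous_abs.tendsto (0:ℝ)
  filter_upwards [this (Iio_mem_nhds (by norm_num : (0:ℝ) < 1/2))] with x hx
  exact le_of_lt hx

lemma aux_exp3_s13 : (fun x : ℝ => Real.exp x - (1 + x + x^2/2)) =O[𝓝 (0:ℝ)] fun x => x^(3:ℕ) := by
  apply IsBigO.of_bound 1
  filter_upwards [aux_abs_small] with x hx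
  have h1 : |x| ≤ 1 := hx.trans (by norm_num)
  have := Real.exp_bound h1 (by norm_num : 0 < 3)
  have hs : ∑ m ∈ Finset.range 3, x ^ m / m.factorial = 1 + x + x^2/2 := by
    norm_num [Finset.sum_range_succ, Nat.factorial]
  rw [hs] at this
  rw [Real.norm_eq_abs, Real.norm_eq_abs, abs_pow]
  refine this.trans ?_
  have := pow_nonneg (abs_nonneg x) 3
  norm_num [Nat.factorial]
  nlinarith

lemma aux_exp4 : (fun x : ℝ => Real.exp x - (1 + x + x^2/2 + x^3/6)) =O[𝓝 (0:ℝ)] fun x => x^(4:ℕ) := by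
  apply IsBigO.of_bound 1
  filter_upwards [aux_abs_small] with x hx
  have h1 : |x| ≤ 1 := hx.trans (by norm_num)
  have := Real.exp_bound h1 (by norm_num : 0 < 4)
  have hs : ∑ m ∈ Finset.range 4, x ^ m / m.factorial = 1 + x + x^2/2 + x^3/6 := by
    norm_num [Finset.sum_range_succ, Nat.factorial]
  rw [hs] at this
  rw [Real.norm_eq_abs, Real.norm_eq_abs, abs_pow]
  refine this.trans ?_
  have := pow_nonneg (abs_nonneg x) 4
  norm_num [Nat.factorial]
  nlinarith

lemma aux_log3 : (fun x : ℝ => Real.log (1+x) - (x - x^2/2)) =O[𝓝 (0:ℝ)] fun x => x^(3:ℕ) := by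
  apply IsBigO.of_bound 2
  filter_upwards [aux_abs_small] with x hx
  have h1 : |(-x)| < 1 := by rw [abs_neg]; linarith [abs_nonneg x, hx]
  have := Real.abs_log_sub_add_sum_range_le h1 2
  have hs : ∑ i ∈ Finset.range 2, (-x) ^ (i + 1) / (i + 1) = -x + x^2/2 := by
    norm_num [Finset.sum_range_succ]
  rw [hs] at this
  rw [Real.norm_eq_abs, Real.norm_eq_abs, abs_pow]
  have h3 : |(-x)|^(2+1) = |x|^3 := by rw [abs_neg]
  rw [h3] at this
  have h4 : Real.log (1 - -x) = Real.log (1+x) := by ring_nf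
  rw [h4] at this
  have h5 : |x|^3 / (1 - |(-x)|) ≤ 2 * |x|^3 := by
    rw [abs_neg]
    rw [div_le_iff₀ (by linarith [abs_nonneg x] : (0:ℝ) < 1 - |x|)]
    nlinarith [pow_nonneg (abs_nonneg x) 3, abs_nonneg x]
  have h6 : Real.log (1+x) - (x - x^2/2) = -x + x^2/2 + Real.log (1+x) := by ring
  rw [h6]
  linarith

lemma aux_exp1 : (fun x : ℝ => Real.exp x - 1) =O[𝓝 (0:ℝ)] fun x => x := by
  apply IsBigO.of_bound 2
  filter_upwards [aux_abs_small] with x hx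
  have h1 : |x| ≤ 1 := hx.trans (by norm_num)
  have := Real.abs_exp_sub_one_le h1
  rw [Real.norm_eq_abs, Real.norm_eq_abs]
  linarith

lemma aux_le_one : ∀ᶠ h : ℝ in 𝓝[>](0:ℝ), h ≤ 1 := by
  apply eventually_nhdsWithin_of_eventually_nhds
  filter_upwards [aux_abs_small] with x hx
  calc x ≤ |x| := le_abs_self x
    _ ≤ 1 := hx.trans (by norm_num)

lemma aux_pow_le {j k : ℕ} (hjk : j ≤ k) : (fun h:ℝ => h^k) =O[𝓝[>](0:ℝ)] fun h => h^j := by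
  apply IsBigO.of_bound 1
  filter_upwards [self_mem_nhdsWithin, aux_le_one] with h hpos hle
  rw [Real.norm_eq_abs, Real.norm_eq_abs, abs_pow, abs_pow, abs_of_pos hpos, one_mul]
  exact pow_le_pow_of_le_one (le_of_lt hpos) hle hjk

lemma aux_id_tendsto : Tendsto (fun h:ℝ => h) (𝓝[>](0:ℝ)) (𝓝 0) :=
  (continuous_id.tendsto (0:ℝ)).mono_left nhdsWithin_le_nhds

lemma aux_cube_tendsto : Tendsto (fun h:ℝ => h^(3:ℕ)) (𝓝[>](0:ℝ)) (𝓝 0) := by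
  have : Tendsto (fun h:ℝ => h^(3:ℕ)) (𝓝 (0:ℝ)) (𝓝 ((0:ℝ)^(3:ℕ))) :=
    (continuous_pow 3).tendsto (0:ℝ)
  simpa using this.mono_left nhdsWithin_le_nhds

lemma aux_bdd_mul {c : ℝ} {w f : ℝ → ℝ}
    (hw : Tendsto w (𝓝[>](0:ℝ)) (𝓝 c)) (hf : f =O[𝓝[>](0:ℝ)] fun h => h^(3:ℕ)) :
    (fun h => w h * f h) =O[𝓝[>](0:ℝ)] fun h => h^(3:ℕ) := by
  have h1 : w =O[𝓝[>](0:ℝ)] (fun _ => (1:ℝ)) := hw.isBigO_one ℝ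
  have := h1.mul hf
  simpa using this

lemma aux_main (α θ : ℝ) (hne : α + 2 * θ ≠ 0) (M : ℕ) (hM : 0 < M)
    (hm : (M : ℝ) = 1 + (α + 2 * θ) / 2 - (5 * α + 12 * θ) / (6 * (α + 2 * θ))) :
    (fun h : ℝ => -α * Real.log ((1 - Real.exp (-h))/h) + θ*h +
      Real.log ((1 - (α + 2 * θ) / (2 * (M:ℝ))) +
        (α + 2 * θ) / (2 * (M:ℝ)) * Real.exp (-((M:ℝ)*h))))
      =O[𝓝[>](0:ℝ)] fun h : ℝ => h^(3:ℕ) := by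
  have hM0 : (M:ℝ) ≠ 0 := Nat.cast_ne_zero.2 hM.ne'
  set l : Filter ℝ := 𝓝[>](0:ℝ) with hl
  set L : ℝ := (α + 2 * θ) / (2 * (M:ℝ)) with hLdef
  set u : ℝ → ℝ := fun h => (1 - Real.exp (-h))/h - 1 with hu_def
  set p : ℝ → ℝ := fun h => -(h/2) + h^2/6 with hp_def
  set v : ℝ → ℝ := fun h => L * (Real.exp (-((M:ℝ)*h)) - 1) with hv_def
  set q : ℝ → ℝ := fun h => -(L*(M:ℝ)*h) + L*(M:ℝ)^2*h^2/2 with hq_def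
  have hpos : ∀ᶠ h in l, 0 < h := self_mem_nhdsWithin
  have htneg : Tendsto (fun h:ℝ => -h) l (𝓝 0) := by
    simpa using aux_id_tendsto.neg
  have htMneg : Tendsto (fun h:ℝ => -((M:ℝ)*h)) l (𝓝 0) := by
    have := aux_id_tendsto.const_mul (M:ℝ)
    simpa using this.neg
  -- step A : e := u - p is O(h^3)
  have he : (fun h => u h - p h) =O[l] fun h => h^(3:ℕ) := by
    have hR : (fun h:ℝ => Real.exp (-h) - (1 + (-h) + (-h)^2/2 + (-h)^3/6))
        =O[l] fun h => h^(4:ℕ) := by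
      have := aux_exp4.comp_tendsto htneg
      refine this.trans ?_
      apply IsBigO.of_bound 1
      filter_upwards with h
      simp [Function.comp]
    obtain ⟨C, hC⟩ := hR.bound
    apply IsBigO.of_bound C
    filter_upwards [hC, hpos, aux_le_one] with h hb hp1 hle
    have hne' : h ≠ 0 := ne_of_gt hp1
    have key : u h - p h = -(Real.exp (-h) - (1 + (-h) + (-h)^2/2 + (-h)^3/6))/h := by
      simp only [hu_def, hp_def]
      field_simp
      ring
    rw [key, norm_div, norm_neg]
    rw [Real.norm_eq_abs h, abs_of_pos hp1]
    rw [div_le_iff₀ hp1]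
    have h4 : ‖(h:ℝ)^(4:ℕ)‖ = h^3 * h := by
      rw [Real.norm_eq_abs, abs_of_pos (by positivity)]; ring
    have h3 : ‖(h:ℝ)^(3:ℕ)‖ = h^3 := by
      rw [Real.norm_eq_abs, abs_of_pos (by positivity)]
    calc ‖Real.exp (-h) - (1 + (-h) + (-h)^2/2 + (-h)^3/6)‖ ≤ C * ‖(h:ℝ)^(4:ℕ)‖ := hb
      _ = C * ‖(h:ℝ)^(3:ℕ)‖ * h := by rw [h4, h3]; ring
  have hcube_le : (fun h:ℝ => h^(3:ℕ)) =O[l] fun h => h := by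
    have := aux_pow_le (show 1 ≤ 3 by norm_num)
    simpa using this
  have hp1 : p =O[l] fun h => h := by
    apply IsBigO.of_bound 1
    filter_upwards [hpos, aux_le_one] with h hp hle
    simp only [hp_def]
    rw [Real.norm_eq_abs, Real.norm_eq_abs, abs_of_pos hp]
    rw [abs_le]
    constructor <;> nlinarith
  have hu1 : u =O[l] fun h => h := by
    have := (he.trans hcube_le).add hp1
    refine this.congr_left fun h => by ring
  have hu0 : Tendsto u l (𝓝 0) := hu1.trans_tendsto aux_id_tendsto
  -- step C : f := v - q is O(h^3)
  have hf : (fun h => v h - q h) =O[l] fun h => h^(3:ℕ) := by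
    have h1 := aux_exp3_s13.comp_tendsto htMneg
    have h2 : (fun h:ℝ => (-((M:ℝ)*h))^(3:ℕ)) =O[l] fun h => h^(3:ℕ) := by
      have := (isBigO_refl (fun h:ℝ => h^(3:ℕ)) l).const_mul_left ((-(M:ℝ))^3)
      refine this.congr_left fun h => by ring
    have h3 := (h1.trans h2).const_mul_left L
    refine h3.congr_left fun h => ?_
    simp only [Function.comp, hv_def, hq_def]
    ring
  have hq1 : q =O[l] fun h => h := by
    have hw : Tendsto (fun h:ℝ => -(L*(M:ℝ)) + L*(M:ℝ)^2*h/2) l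
        (𝓝 (-(L*(M:ℝ)) + L*(M:ℝ)^2*0/2)) := by
      apply Tendsto.mono_left _ nhdsWithin_le_nhds
      exact Continuous.tendsto (continuous_const.add
        ((continuous_const.mul continuous_id).div_const 2)) 0
    have h1 : (fun h:ℝ => -(L*(M:ℝ)) + L*(M:ℝ)^2*h/2) =O[l] (fun _ => (1:ℝ)) :=
      hw.isBigO_one ℝ
    have h2 := (isBigO_refl (fun h:ℝ => h) l).mul h1
    simp only [mul_one] at h2
    exact h2.congr_left fun h => by simp only [hq_def]; ring
  have hv1 : v =O[l] fun h => h := by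
    have := (hf.trans hcube_le).add hq1
    refine this.congr_left fun h => by ring
  have hv0 : Tendsto v l (𝓝 0) := hv1.trans_tendsto aux_id_tendsto
  -- step D : log expansions
  have hLu : (fun h => Real.log (1 + u h) - (u h - (u h)^2/2)) =O[l] fun h => h^(3:ℕ) := by
    have h1 := aux_log3.comp_tendsto hu0
    have h2 : ((fun x:ℝ => x^(3:ℕ)) ∘ u) =O[l] fun h => h^(3:ℕ) := by
      have := hu1.pow 3
      exact this
    exact h1.trans h2
  have hLv : (fun h => Real.log (1 + v h) - (v h - (v h)^2/2)) =O[l] fun h => h^(3:ℕ) := by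
    have h1 := aux_log3.comp_tendsto hv0
    have h2 : ((fun x:ℝ => x^(3:ℕ)) ∘ v) =O[l] fun h => h^(3:ℕ) := by
      have := hv1.pow 3
      exact this
    exact h1.trans h2
  -- coefficients
  have hc1 : α/2 + θ - L * (M:ℝ) = 0 := by
    rw [hLdef]; field_simp; ring
  have hc2 : -α/24 + L * (M:ℝ)^2/2 - L^2 * (M:ℝ)^2/2 = 0 := by
    have hs6 : 6*(α+2*θ)*(M:ℝ) = α + 3*(α+2*θ)^2 := by
      field_simp at hm
      linear_combination hm/2
    have e1 : (α + 2*θ)/(2*(M:ℝ)) * (M:ℝ)^2 / 2 = (α+2*θ)*(M:ℝ)/4 := by field_simp; ring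
    have e2 : ((α + 2*θ)/(2*(M:ℝ)))^2 * (M:ℝ)^2/2 = (α+2*θ)^2/8 := by field_simp; ring
    rw [hLdef, e1, e2]
    linear_combination (1/24) * hs6
  -- step F : polynomial part
  have hP : (fun h => -α*(p h - (p h)^2/2) + θ*h + (q h - (q h)^2/2)) =O[l] fun h => h^(3:ℕ) := by
    have key : ∀ h:ℝ, -α*(p h - (p h)^2/2) + θ*h + (q h - (q h)^2/2)
        = (α/2 + θ - L*(M:ℝ))*h + (-α/24 + L*(M:ℝ)^2/2 - L^2*(M:ℝ)^2/2)*h^2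
          + (-α/12 + L^2*(M:ℝ)^3/2)*h^3 + (α/72 - L^2*(M:ℝ)^4/8)*h^4 := by
      intro h
      simp only [hp_def, hq_def]
      ring
    have hbig : (fun h:ℝ => (-α/12 + L^2*(M:ℝ)^3/2)*h^3 + (α/72 - L^2*(M:ℝ)^4/8)*h^4)
        =O[l] fun h => h^(3:ℕ) := by
      have t1 := (isBigO_refl (fun h:ℝ => h^(3:ℕ)) l).const_mul_left (-α/12 + L^2*(M:ℝ)^3/2)
      have t2 := (aux_pow_le (show 3 ≤ 4 by norm_num)).const_mul_left (α/72 - L^2*(M:ℝ)^4/8)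
      exact t1.add t2
    refine hbig.congr_left fun h => ?_
    rw [key h, hc1, hc2]
    ring
  -- step G : A3
  have hA3 : (fun h => -α*(u h - (u h)^2/2) + θ*h + (v h - (v h)^2/2)) =O[l] fun h => h^(3:ℕ) := by
    have hptend : Tendsto p l (𝓝 (p 0)) := by
      have : Continuous p := by
        rw [hp_def]
        exact (continuous_id.div_const 2).neg.add ((continuous_pow 2).div_const 6)
      exact (this.tendsto 0).mono_left nhdsWithin_le_nhds
    have hqtend : Tendsto q l (𝓝 (q 0)) := by
      have : Continuous q := by
        rw [hq_def]
        exact (continuous_const.mul continuous_id).neg.add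
          ((continuous_const.mul (continuous_pow 2)).div_const 2)
      exact (this.tendsto 0).mono_left nhdsWithin_le_nhds
    have he0 : Tendsto (fun h => u h - p h) l (𝓝 0) := he.trans_tendsto aux_cube_tendsto
    have hf0 : Tendsto (fun h => v h - q h) l (𝓝 0) := hf.trans_tendsto aux_cube_tendsto
    have T1 : (fun h => p h * (u h - p h)) =O[l] fun h => h^(3:ℕ) := aux_bdd_mul hptend he
    have T2 : (fun h => (u h - p h) * (u h - p h)) =O[l] fun h => h^(3:ℕ) := aux_bdd_mul he0 he
    have T3 : (fun h => q h * (v h - q h)) =O[l] fun h => h^(3:ℕ) := aux_bdd_mul hqtend hf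
    have T4 : (fun h => (v h - q h) * (v h - q h)) =O[l] fun h => h^(3:ℕ) := aux_bdd_mul hf0 hf
    have comb : (fun h => (-α*(p h - (p h)^2/2) + θ*h + (q h - (q h)^2/2))
        + (-α) * ((u h - p h) - p h * (u h - p h) - (u h - p h) * (u h - p h)/2)
        + ((v h - q h) - q h * (v h - q h) - (v h - q h) * (v h - q h)/2))
        =O[l] fun h => h^(3:ℕ) := by
      refine (hP.add ?_).add ?_
      · refine IsBigO.const_mul_left ?_ (-α)
        exact (he.sub T1).sub (T2.const_mul_left (1/2) |>.congr_left fun h => by ring)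
      · exact (hf.sub T3).sub (T4.const_mul_left (1/2) |>.congr_left fun h => by ring)
    refine comb.congr_left fun h => by ring
  -- assemble
  have final : (fun h => -α * (Real.log (1 + u h) - (u h - (u h)^2/2))
      + (Real.log (1 + v h) - (v h - (v h)^2/2))
      + (-α*(u h - (u h)^2/2) + θ*h + (v h - (v h)^2/2))) =O[l] fun h => h^(3:ℕ) :=
    ((hLu.const_mul_left (-α)).add hLv).add hA3
  refine final.congr_left fun h => ?_
  have harg1 : (1 - Real.exp (-h))/h = 1 + u h := by simp only [hu_def]; ring
  have harg2 : (1 - L) + L * Real.exp (-((M:ℝ)*h)) = 1 + v h := by simp only [hv_def]; ring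
  rw [harg1, harg2]
  ring

/-- With `m = 1 + (α+2θ)/2 - (5α+12θ)/(6(α+2θ))` a positive integer,
`λ₂ = (α+2θ)/(2m)`, `λ₁ = 1-λ₂`, the generating function
`ω(ξ) = (1-ξ)^{-α}(λ₁ + λ₂ ξ^m)` satisfies `h^α e^{θh} ω(e^{-h}) = 1 + O(h³)`. -/
theorem stmt13 (α θ : ℝ) (hne : α + 2 * θ ≠ 0) (M : ℕ) (hM : 0 < M)
    (hm : (M : ℝ) = 1 + (α + 2 * θ) / 2 - (5 * α + 12 * θ) / (6 * (α + 2 * θ))) :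
    (fun h : ℝ => h ^ α * Real.exp (θ * h) *
        ((1 - Real.exp (-h)) ^ (-α) *
          ((1 - (α + 2 * θ) / (2 * M)) +
            (α + 2 * θ) / (2 * M) * Real.exp (-h) ^ M)) - 1)
      =O[𝓝[>] (0 : ℝ)] fun h : ℝ => h ^ (3 : ℕ) := by

  have hM0 : (M:ℝ) ≠ 0 := Nat.cast_ne_zero.2 hM.ne'
  set l : Filter ℝ := 𝓝[>](0:ℝ) with hl
  set L : ℝ := (α + 2 * θ) / (2 * (M:ℝ)) with hLdef
  set g : ℝ → ℝ := fun h => -α * Real.log ((1 - Real.exp (-h))/h) + θ*h +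
    Real.log ((1 - L) + L * Real.exp (-((M:ℝ)*h))) with hg_def
  have hg : g =O[l] fun h => h^(3:ℕ) := by
    rw [hg_def, hLdef]
    exact aux_main α θ hne M hM hm
  have htend : Tendsto g l (𝓝 0) := hg.trans_tendsto aux_cube_tendsto
  have hF : (fun h => Real.exp (g h) - 1) =O[l] fun h => h^(3:ℕ) := by
    have h1 : (fun h => Real.exp (g h) - 1) =O[l] g := aux_exp1.comp_tendsto htend
    exact h1.trans hg
  have hQpos : ∀ᶠ h in l, 0 < (1 - L) + L * Real.exp (-((M:ℝ)*h)) := by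
    have hc : Continuous fun h:ℝ => (1 - L) + L * Real.exp (-((M:ℝ)*h)) :=
      continuous_const.add (continuous_const.mul
        (Real.continuous_exp.comp (continuous_const.mul continuous_id).neg))
    have ht : Tendsto (fun h:ℝ => (1 - L) + L * Real.exp (-((M:ℝ)*h))) l (𝓝 1) := by
      have h2 : Tendsto (fun h:ℝ => (1 - L) + L * Real.exp (-((M:ℝ)*h))) (𝓝 0)
          (𝓝 ((1 - L) + L * Real.exp (-((M:ℝ)*0)))) := hc.tendsto 0
      have h3 : (1 - L) + L * Real.exp (-((M:ℝ)*0)) = 1 := by norm_num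
      rw [h3] at h2
      exact h2.mono_left nhdsWithin_le_nhds
    exact ht.eventually (eventually_gt_nhds one_pos)
  have heq : (fun h : ℝ => h ^ α * Real.exp (θ * h) *
      ((1 - Real.exp (-h)) ^ (-α) *
        ((1 - L) + L * Real.exp (-h) ^ M)) - 1) =ᶠ[l] fun h => Real.exp (g h) - 1 := by
    filter_upwards [self_mem_nhdsWithin, hQpos] with h hp hQ
    replace hp : (0:ℝ) < h := hp
    have h1 : 0 < 1 - Real.exp (-h) := by
      have : Real.exp (-h) < 1 := Real.exp_lt_one_iff.2 (by linarith)
      linarith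
    have hw : 0 < (1 - Real.exp (-h))/h := div_pos h1 hp
    have hrw : ((1 - Real.exp (-h))/h) ^ (-α) = (1 - Real.exp (-h)) ^ (-α) * h ^ α := by
      rw [Real.div_rpow h1.le hp.le, Real.rpow_neg hp.le, div_eq_mul_inv, inv_inv]
    have hexpM : Real.exp (-h) ^ M = Real.exp (-((M:ℝ)*h)) := by
      rw [← Real.exp_nat_mul]
      congr 1
      ring
    have e3 : Real.exp (-α * Real.log ((1 - Real.exp (-h))/h))
        = ((1 - Real.exp (-h))/h) ^ (-α) := by
      rw [Real.rpow_def_of_pos hw]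
      congr 1
      ring
    simp only [hg_def]
    rw [Real.exp_add, Real.exp_add, Real.exp_log hQ, e3, hrw, hexpM]
    ring
  exact heq.trans_isBigO hF
end

section
/- Let $\alpha \neq 0$ and $\theta \in \mathbb{R}$ with $\alpha(\alpha+\theta) \geq 0$ and $3\alpha + 2\theta \neq 0$. Then the generalized BDF2-$\theta$ generating function $\omega(\xi) = \left(\frac{3\alpha+2\theta}{2\alpha} - \frac{2\alpha+2\theta}{\alpha}\xi + \frac{\alpha+2\theta}{2\alpha}\xi^2\right)^{-\alpha}$ satisfies $h^{\alpha}e^{\theta h}\omega(e^{-h}) = 1 + O(h^2)$ as $h \to 0^+$. -/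
open Filter Topology Asymptotics

/-- Second-order Taylor bound: a `C²` function vanishing to first order at `0`
is `O(x²)` near `0`. -/
lemma taylor2_isBigO {f : ℝ → ℝ} (hf : ContDiffAt ℝ 2 f 0) (h0 : f 0 = 0)
    (h1 : deriv f 0 = 0) : f =O[𝓝 (0:ℝ)] fun x => x ^ 2 := by
  obtain ⟨u, hu, hfu⟩ := hf.contDiffOn (le_refl 2) (by simp)
  obtain ⟨ε, hε, hball⟩ := Metric.mem_nhds_iff.mp hu
  have hfs : ContDiffOn ℝ 2 f (Metric.ball 0 ε) := hfu.mono hball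
  have hderiv : ContDiffOn ℝ 1 (deriv f) (Metric.ball 0 ε) :=
    hfs.deriv_of_isOpen Metric.isOpen_ball (by norm_num)
  have hdiff : DifferentiableAt ℝ (deriv f) 0 :=
    (hderiv.differentiableOn (by norm_num)).differentiableAt
      (Metric.ball_mem_nhds _ hε)
  have hO : (fun x => deriv f x) =O[𝓝 (0:ℝ)] fun x => x := by
    simpa [h1] using hdiff.isBigO_sub
  obtain ⟨c, hc0, hc⟩ := hO.exists_nonneg
  have hev : ∀ᶠ x in 𝓝 (0:ℝ), ‖deriv f x‖ ≤ c * ‖x‖ ∧ x ∈ Metric.ball (0:ℝ) ε :=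
    hc.bound.and (eventually_of_mem (Metric.ball_mem_nhds _ hε) fun x hx => hx)
  obtain ⟨δ, hδ0, hδ⟩ := Metric.eventually_nhds_iff_ball.mp hev
  rw [isBigO_iff]
  refine ⟨c, eventually_of_mem (Metric.ball_mem_nhds _ hδ0) fun x hx => ?_⟩
  have hsub : Metric.closedBall (0:ℝ) ‖x‖ ⊆ Metric.ball 0 δ := by
    intro t ht
    simp only [Metric.mem_closedBall, Real.dist_eq, sub_zero] at ht
    simp only [Metric.mem_ball, Real.dist_eq, sub_zero] at hx ⊢
    exact lt_of_le_of_lt ht hx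
  have hdf : ∀ t ∈ Metric.closedBall (0:ℝ) ‖x‖, DifferentiableAt ℝ f t := fun t ht =>
    (hfs.differentiableOn (by norm_num)).differentiableAt
      (Metric.isOpen_ball.mem_nhds (hδ t (hsub ht)).2)
  have hbd : ∀ t ∈ Metric.closedBall (0:ℝ) ‖x‖, ‖deriv f t‖ ≤ c * ‖x‖ := by
    intro t ht
    refine le_trans (hδ t (hsub ht)).1 (mul_le_mul_of_nonneg_left ?_ hc0)
    simpa [Real.norm_eq_abs, Real.dist_eq] using ht
  have hxmem : x ∈ Metric.closedBall (0:ℝ) ‖x‖ := by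
    simp [Metric.mem_closedBall, Real.dist_eq]
  have key := (convex_closedBall (0:ℝ) ‖x‖).norm_image_sub_le_of_norm_deriv_le hdf hbd
    (Metric.mem_closedBall_self (norm_nonneg x)) hxmem
  calc ‖f x‖ = ‖f x - f 0‖ := by rw [h0, sub_zero]
    _ ≤ c * ‖x‖ * ‖x - 0‖ := key
    _ = c * ‖x ^ 2‖ := by
        rw [sub_zero, Real.norm_eq_abs, Real.norm_eq_abs, abs_pow, pow_two]; ring

/-- Cubic Taylor bound for `exp`. -/
lemma exp_cubic_isBigO :
    (fun x : ℝ => Real.exp x - (1 + x + x ^ 2 / 2)) =O[𝓝 (0:ℝ)] fun x => x ^ 3 := by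
  rw [isBigO_iff]
  refine ⟨1, eventually_of_mem (Metric.ball_mem_nhds (0:ℝ) one_pos) fun x hx => ?_⟩
  have hx1 : |x| ≤ 1 := by
    simp only [Metric.mem_ball, Real.dist_eq, sub_zero] at hx
    exact hx.le
  have := Real.exp_bound hx1 (n := 3) (by norm_num)
  have hsum : ∑ m ∈ Finset.range 3, x ^ m / m.factorial = 1 + x + x ^ 2 / 2 := by
    norm_num [Finset.sum_range_succ]
  rw [hsum] at this
  calc ‖Real.exp x - (1 + x + x ^ 2 / 2)‖ ≤ |x| ^ 3 * ((3:ℕ).succ / ((3:ℕ).factorial * 3)) :=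
        this
    _ ≤ 1 * |x| ^ 3 := by
        have h3 : (0:ℝ) ≤ |x| ^ 3 := by positivity
        rw [one_mul]
        norm_num [Nat.factorial]
        nlinarith
    _ = 1 * ‖x ^ 3‖ := by simp [Real.norm_eq_abs, abs_pow]

/-- The generalized BDF2-θ generating function is consistent of order 2:
`h^α e^{θh} ω(e^{-h}) = 1 + O(h²)` as `h → 0⁺`. -/
theorem stmt16 (α θ : ℝ) (hα : α ≠ 0) (hcond : 0 ≤ α * (α + θ))
    (h3 : 3 * α + 2 * θ ≠ 0) :
    (fun h : ℝ => h ^ α * Real.exp (θ * h) *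
        ((3 * α + 2 * θ) / (2 * α) - (2 * α + 2 * θ) / α * Real.exp (-h) +
            (α + 2 * θ) / (2 * α) * Real.exp (-h) ^ 2) ^ (-α) - 1)
      =O[𝓝[>] (0 : ℝ)] fun h : ℝ => h ^ (2 : ℕ) := by
  set l : Filter ℝ := 𝓝[>] (0:ℝ) with hl
  set a : ℝ := (3 * α + 2 * θ) / (2 * α) with ha
  set b : ℝ := (2 * α + 2 * θ) / α with hb
  set c : ℝ := (α + 2 * θ) / (2 * α) with hc
  set P : ℝ → ℝ := fun h => a - b * Real.exp (-h) + c * Real.exp (-h) ^ 2 with hP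
  set v : ℝ → ℝ := fun h => P h / h - 1 with hv
  set r : ℝ → ℝ := fun h => v h - θ / α * h with hr
  have hle : l ≤ 𝓝 (0:ℝ) := nhdsWithin_le_nhds
  have hsq : (fun h : ℝ => h ^ 2) =O[l] fun h => h := by
    rw [isBigO_iff]
    refine ⟨1, ?_⟩
    filter_upwards [Ioo_mem_nhdsGT_of_mem (Set.mem_Ico.mpr ⟨le_refl 0, one_pos⟩)] with x hx
    rw [Real.norm_eq_abs, Real.norm_eq_abs, one_mul, abs_of_pos hx.1,
      abs_of_pos (pow_pos hx.1 2)]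
    nlinarith [hx.1, hx.2]
  -- remainders of exp
  set R₁ : ℝ → ℝ := fun h => Real.exp (-h) - (1 - h + h ^ 2 / 2) with hR₁
  set R₂ : ℝ → ℝ := fun h => Real.exp (-h) ^ 2 - (1 - 2 * h + 2 * h ^ 2) with hR₂
  have hR₁O : R₁ =O[𝓝 (0:ℝ)] fun h => h ^ 3 := by
    have ht : Tendsto (fun h : ℝ => -h) (𝓝 (0:ℝ)) (𝓝 (0:ℝ)) := by
      simpa using (continuous_neg.tendsto (0:ℝ))
    have hcomp := exp_cubic_isBigO.comp_tendsto ht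
    simp only [Function.comp_def] at hcomp
    have hcube : (fun h : ℝ => (-h) ^ 3) =O[𝓝 (0:ℝ)] fun h => h ^ 3 := by
      have heq : (fun h : ℝ => (-h) ^ 3) = fun h : ℝ => (-1 : ℝ) * h ^ 3 := by
        funext h; ring
      rw [heq]; exact (isBigO_refl _ _).const_mul_left _
    refine (hcomp.trans hcube).congr_left fun x => ?_
    simp only [hR₁]; ring
  have hR₂O : R₂ =O[𝓝 (0:ℝ)] fun h => h ^ 3 := by
    have ht : Tendsto (fun h : ℝ => -(2 * h)) (𝓝 (0:ℝ)) (𝓝 (0:ℝ)) := by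
      simpa using ((show Continuous fun h : ℝ => -(2 * h) by fun_prop).tendsto (0:ℝ))
    have hcomp := exp_cubic_isBigO.comp_tendsto ht
    simp only [Function.comp_def] at hcomp
    have hcube : (fun h : ℝ => (-(2 * h)) ^ 3) =O[𝓝 (0:ℝ)] fun h => h ^ 3 := by
      have heq : (fun h : ℝ => (-(2 * h)) ^ 3) = fun h : ℝ => (-8 : ℝ) * h ^ 3 := by
        funext h; ring
      rw [heq]; exact (isBigO_refl _ _).const_mul_left _
    refine (hcomp.trans hcube).congr_left fun x => ?_
    have hsq : Real.exp (-x) ^ 2 = Real.exp (-(2 * x)) := by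
      rw [sq, ← Real.exp_add]; congr 1; ring
    simp only [hR₂, hsq]; ring
  -- identity for the remainder r
  have hrid : ∀ h : ℝ, h ≠ 0 → r h = (-b * R₁ h + c * R₂ h) / h := by
    intro h hh
    simp only [hr, hv]
    rw [eq_div_iff hh]
    simp only [hP, hR₁, hR₂, ha, hb, hc]
    field_simp
    ring
  have hrO : r =O[l] fun h => h ^ 2 := by
    have hnum : (fun h => -b * R₁ h + c * R₂ h) =O[l] fun h => h ^ 3 :=
      (((hR₁O.const_mul_left (-b)).add (hR₂O.const_mul_left c)).mono hle)
    have hdiv : (fun h => (-b * R₁ h + c * R₂ h) / h) =O[l] fun h => h ^ 3 * h⁻¹ := by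
      simpa [div_eq_mul_inv] using hnum.mul (isBigO_refl (fun h : ℝ => h⁻¹) l)
    have heq1 : (fun h => (-b * R₁ h + c * R₂ h) / h) =ᶠ[l] r := by
      filter_upwards [self_mem_nhdsWithin] with h hh
      exact (hrid h (ne_of_gt hh)).symm
    have heq2 : (fun h : ℝ => h ^ 3 * h⁻¹) =ᶠ[l] fun h => h ^ 2 := by
      filter_upwards [self_mem_nhdsWithin] with h hh
      have h0 : (h:ℝ) ≠ 0 := ne_of_gt hh
      field_simp
    exact hdiv.congr' heq1 heq2
  have hvO : v =O[l] fun h => h := by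
    have h1 : (fun h : ℝ => θ / α * h) =O[l] fun h => h :=
      (isBigO_refl _ l).const_mul_left _
    have : v = fun h => θ / α * h + r h := by
      funext h; simp only [hr]; ring
    rw [this]
    exact h1.add (hrO.trans hsq)
  have hv0 : Tendsto v l (𝓝 0) :=
    hvO.trans_tendsto ((continuous_id.tendsto (0:ℝ)).mono_left hle)
  -- φ(x) = (1+x)^(-α) - 1 + α x  = O(x²)
  set φ : ℝ → ℝ := fun x => (1 + x) ^ (-α) - 1 + α * x with hφdef
  have hφC : ContDiffAt ℝ 2 φ 0 := by
    have h1 : ContDiffAt ℝ 2 (fun x : ℝ => (1 + x) ^ (-α)) 0 := by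
      have houter : ContDiffAt ℝ 2 (fun y : ℝ => y ^ (-α)) ((fun x : ℝ => 1 + x) 0) := by
        apply Real.contDiffAt_rpow_const_of_ne
        norm_num
      exact houter.comp 0 (contDiffAt_const.add contDiffAt_id)
    exact (h1.sub contDiffAt_const).add (contDiffAt_const.mul contDiffAt_id)
  have hφ0 : φ 0 = 0 := by simp [hφdef]
  have hφd : deriv φ 0 = 0 := by
    have hin : HasDerivAt (fun x : ℝ => 1 + x) 1 0 := by
      simpa using (hasDerivAt_id (0:ℝ)).const_add 1
    have hcomp : HasDerivAt (fun x : ℝ => (1 + x) ^ (-α))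
        (1 * (-α) * ((1:ℝ) + 0) ^ (-α - 1)) 0 :=
      hin.rpow_const (Or.inl (by norm_num))
    have hφ' : HasDerivAt φ (1 * (-α) * ((1:ℝ) + 0) ^ (-α - 1) - 0 + α * 1) 0 := by
      refine HasDerivAt.add ?_ ?_
      · exact hcomp.sub (hasDerivAt_const 0 1)
      · simpa using (hasDerivAt_id (0:ℝ)).const_mul α
    rw [hφ'.deriv]
    simp [Real.one_rpow]
  have hφO : φ =O[𝓝 (0:ℝ)] fun x => x ^ 2 := taylor2_isBigO hφC hφ0 hφd
  have hφvO : (fun h => φ (v h)) =O[l] fun h => h ^ 2 := by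
    have := hφO.comp_tendsto hv0
    simp only [Function.comp_def] at this
    refine this.trans ?_
    simpa using hvO.pow 2
  -- exp part
  have hexpC : ContDiffAt ℝ 2 (fun x : ℝ => Real.exp x - 1 - x) 0 :=
    ((Real.contDiff_exp.contDiffAt.sub contDiffAt_const).sub contDiffAt_id)
  have hexpd : deriv (fun x : ℝ => Real.exp x - 1 - x) 0 = 0 := by
    have : HasDerivAt (fun x : ℝ => Real.exp x - 1 - x) (Real.exp 0 - 0 - 1) 0 := by
      refine HasDerivAt.sub ?_ (hasDerivAt_id 0)
      exact (Real.hasDerivAt_exp 0).sub (hasDerivAt_const (0:ℝ) (1:ℝ))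
    rw [this.deriv]; simp
  have hexpO : (fun x : ℝ => Real.exp x - 1 - x) =O[𝓝 (0:ℝ)] fun x => x ^ 2 :=
    taylor2_isBigO hexpC (by simp) hexpd
  have hA : (fun h => Real.exp (θ * h) - 1 - θ * h) =O[l] fun h => h ^ 2 := by
    have htm : Tendsto (fun h : ℝ => θ * h) (𝓝 (0:ℝ)) (𝓝 (0:ℝ)) := by
      simpa using ((show Continuous fun h : ℝ => θ * h by fun_prop).tendsto (0:ℝ))
    have hcomp := hexpO.comp_tendsto (htm.mono_left hle)
    simp only [Function.comp_def] at hcomp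
    refine hcomp.trans ?_
    have : (fun h : ℝ => (θ * h) ^ 2) =O[l] fun h => h ^ 2 := by
      simpa [mul_pow] using ((isBigO_refl (fun h : ℝ => h ^ 2) l).const_mul_left (θ ^ 2))
    exact this
  have hE1 : (fun h => Real.exp (θ * h) - 1) =O[l] fun h => h := by
    have : (fun h => Real.exp (θ * h) - 1) = fun h =>
        (Real.exp (θ * h) - 1 - θ * h) + θ * h := by funext h; ring
    rw [this]
    exact (hA.trans hsq).add ((isBigO_refl (fun h : ℝ => h) l).const_mul_left θ)
  -- the inner big-O bounds combined
  have hD : (fun h => (Real.exp (θ * h) - 1) * (-α * v h + φ (v h))) =O[l]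
      fun h => h ^ 2 := by
    have hfac : (fun h => -α * v h + φ (v h)) =O[l] fun h => h := by
      exact (hvO.const_mul_left (-α)).add (hφvO.trans hsq)
    exact (hE1.mul hfac).congr_right fun x => (pow_two x).symm
  have hsum : (fun h => (Real.exp (θ * h) - 1 - θ * h) + (-α) * r h + φ (v h) +
      (Real.exp (θ * h) - 1) * (-α * v h + φ (v h))) =O[l] fun h => h ^ 2 :=
    ((hA.add (hrO.const_mul_left (-α))).add hφvO).add hD
  -- eventual equality with the target function
  refine hsum.congr' ?_ EventuallyEq.rfl
  have hvsmall : ∀ᶠ h in l, |v h| < 1 := by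
    have := hv0 (Metric.ball_mem_nhds (0:ℝ) one_pos)
    filter_upwards [this] with h hh
    simpa [Real.dist_eq] using hh
  filter_upwards [self_mem_nhdsWithin, hvsmall] with h hh hvh
  have hh0 : (0:ℝ) < h := hh
  have h1v : (0:ℝ) < 1 + v h := by
    have := abs_lt.mp hvh
    linarith [this.1]
  have hPh : P h = h * (1 + v h) := by
    simp only [hv]
    field_simp
    ring
  have hPpos : 0 < P h := by rw [hPh]; positivity
  -- rewrite the main expression
  have hkey : h ^ α * Real.exp (θ * h) * (P h) ^ (-α) - 1 =
      Real.exp (θ * h) * (1 + v h) ^ (-α) - 1 := by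
    rw [hPh, Real.mul_rpow hh0.le h1v.le, ← mul_assoc]
    rw [show h ^ α * Real.exp (θ * h) * h ^ (-α) =
      (h ^ α * h ^ (-α)) * Real.exp (θ * h) by ring]
    rw [← Real.rpow_add hh0]
    simp
  have halg : Real.exp (θ * h) * (1 + v h) ^ (-α) - 1 =
      (Real.exp (θ * h) - 1 - θ * h) + (-α) * r h + φ (v h) +
      (Real.exp (θ * h) - 1) * (-α * v h + φ (v h)) := by
    simp only [hφdef, hr]
    have hαr : -α * (v h - θ / α * h) = -α * v h + θ * h := by
      field_simp
      ring
    set W := (1 + v h) ^ (-α) with hW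
    field_simp
    ring
  symm
  rw [hkey, halg]
end
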